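/- arXiv:2106.06084 — 3 statements merged into one kernel-verified Lean document; each statement's English description precedes it below -/
import Mathlib

section
/- Let p be a prime and h_n the number of elements of p-power order in S_n. For any ℓ ≥ 1, det_{1≤i,j≤ℓ} ( binom(pi, j) · h_{pi - j} ) = p^{ℓ(ℓ+1)/2}. -/
open Finset Function Polynomial Equiv

/-- `hcount p n` is the number of elements of `p`-power order in `S_n`
(including the identity). -/
noncomputable def hcount (p n : ℕ) : ℕ :=
  Nat.card {σ : Equiv.Perm (Fin n) // ∃ k, orderOf σ = p ^ k}



private def phi (k : ℕ) : ℕ → ℤ := fun m => (m : ℤ) ^ k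

private lemma fwdDiff_phi (k : ℕ) :
    fwdDiff 1 (phi k) = ∑ s ∈ range k, (k.choose s : ℤ) • phi s := by
  funext m
  simp only [fwdDiff, phi, Finset.sum_apply, Pi.smul_apply, smul_eq_mul]
  have h1 : ((m + 1 : ℕ) : ℤ) = (m : ℤ) + 1 := by push_cast; ring
  rw [h1, add_pow, Finset.sum_range_succ]
  simp only [one_pow, mul_one, Nat.choose_self, Nat.cast_one, add_sub_cancel_right]
  exact Finset.sum_congr rfl fun s _ => by ring

private lemma fwdDiff_iter_phi_eq_zero : ∀ k t : ℕ, k < t → (fwdDiff 1)^[t] (phi k) = 0 := by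
  intro k
  induction k using Nat.strong_induction_on with
  | _ k IH =>
    intro t ht
    obtain ⟨t', rfl⟩ : ∃ t', t = t' + 1 := ⟨t - 1, by omega⟩
    rw [Function.iterate_succ_apply, fwdDiff_phi, fwdDiff_iter_finset_sum]
    refine Finset.sum_eq_zero fun s hs => ?_
    rw [fwdDiff_iter_const_smul, IH s (mem_range.mp hs) t' (by have := mem_range.mp hs; omega), smul_zero]

private lemma fwdDiff_iter_phi_self : ∀ k : ℕ, (fwdDiff 1)^[k] (phi k) = fun _ => (k.factorial : ℤ) := by
  intro k
  induction k with
  | zero => funext m; simp [phi, Nat.factorial]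
  | succ k IH =>
    rw [Function.iterate_succ_apply, fwdDiff_phi, fwdDiff_iter_finset_sum, Finset.sum_range_succ]
    have h0 : ∀ s ∈ range k, (fwdDiff 1)^[k] ((((k+1).choose s : ℤ)) • phi s) = 0 := by
      intro s hs
      rw [fwdDiff_iter_const_smul, fwdDiff_iter_phi_eq_zero s k (mem_range.mp hs), smul_zero]
    rw [Finset.sum_eq_zero h0, zero_add, fwdDiff_iter_const_smul, IH]
    funext m
    simp only [Pi.smul_apply, smul_eq_mul, Nat.choose_succ_self_right]
    push_cast [Nat.factorial_succ]
    ring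



private def gfun (p j : ℕ) : ℕ → ℤ := fun m => ((p * m).choose j : ℤ)

private lemma Gfun_expand (p j : ℕ) :
    (fun m : ℕ => ((p * m).descFactorial j : ℤ)) =
      ∑ k ∈ range (j + 1), ((descPochhammer ℤ j).coeff k * (p : ℤ) ^ k) • phi k := by
  funext m
  have h1 : (((p * m).descFactorial j : ℤ)) = (descPochhammer ℤ j).eval ((p * m : ℕ) : ℤ) :=
    (descPochhammer_eval_eq_descFactorial ℤ _ _).symm
  have h2 : (descPochhammer ℤ j).natDegree = j := descPochhammer_natDegree ℤ j
  rw [h1, Polynomial.eval_eq_sum_range, h2]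
  simp only [Finset.sum_apply, Pi.smul_apply, smul_eq_mul]
  refine Finset.sum_congr rfl fun k _ => ?_
  simp only [phi]
  push_cast
  ring

private lemma fwdDiff_iter_G_zero (p j t : ℕ) (h : j < t) :
    (fwdDiff 1)^[t] (fun m : ℕ => ((p * m).descFactorial j : ℤ)) = 0 := by
  rw [Gfun_expand, fwdDiff_iter_finset_sum]
  refine Finset.sum_eq_zero fun k hk => ?_
  rw [fwdDiff_iter_const_smul,
    fwdDiff_iter_phi_eq_zero k t (by have := mem_range.mp hk; omega), smul_zero]

private lemma fwdDiff_iter_G_self (p j : ℕ) :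
    (fwdDiff 1)^[j] (fun m : ℕ => ((p * m).descFactorial j : ℤ)) =
      fun _ => (j.factorial : ℤ) * (p : ℤ) ^ j := by
  rw [Gfun_expand, fwdDiff_iter_finset_sum, Finset.sum_range_succ]
  have h0 : ∀ k ∈ range j,
      (fwdDiff 1)^[j] ((((descPochhammer ℤ j).coeff k * (p : ℤ) ^ k)) • phi k) = 0 := by
    intro k hk
    rw [fwdDiff_iter_const_smul, fwdDiff_iter_phi_eq_zero k j (mem_range.mp hk), smul_zero]
  have hc : (descPochhammer ℤ j).coeff j = 1 := by
    have h := (monic_descPochhammer ℤ j).coeff_natDegree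
    rwa [descPochhammer_natDegree] at h
  rw [Finset.sum_eq_zero h0, zero_add, fwdDiff_iter_const_smul, fwdDiff_iter_phi_self, hc]
  funext m
  simp only [Pi.smul_apply, smul_eq_mul]
  ring

private lemma factorial_smul_gfun (p j : ℕ) :
    (j.factorial : ℤ) • gfun p j = fun m : ℕ => ((p * m).descFactorial j : ℤ) := by
  funext m
  simp only [gfun, Pi.smul_apply, smul_eq_mul, Nat.descFactorial_eq_factorial_mul_choose]
  push_cast
  ring

private lemma fwdDiff_iter_gfun_zero (p j t : ℕ) (h : j < t) :
    (fwdDiff 1)^[t] (gfun p j) = 0 := by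
  have h1 : (j.factorial : ℤ) • (fwdDiff 1)^[t] (gfun p j) = 0 := by
    rw [← fwdDiff_iter_const_smul, factorial_smul_gfun, fwdDiff_iter_G_zero p j t h]
  funext m
  have h2 := congrFun h1 m
  simp only [Pi.smul_apply, smul_eq_mul, Pi.zero_apply, mul_eq_zero] at h2 ⊢
  rcases h2 with h2 | h2
  · exact absurd h2 (by exact_mod_cast j.factorial_ne_zero)
  · exact h2

private lemma fwdDiff_iter_gfun_self (p j : ℕ) :
    (fwdDiff 1)^[j] (gfun p j) = fun _ => (p : ℤ) ^ j := by
  have h1 : (j.factorial : ℤ) • (fwdDiff 1)^[j] (gfun p j) =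
      fun _ => (j.factorial : ℤ) * (p : ℤ) ^ j := by
    rw [← fwdDiff_iter_const_smul, factorial_smul_gfun, fwdDiff_iter_G_self]
  funext m
  have h2 := congrFun h1 m
  simp only [Pi.smul_apply, smul_eq_mul] at h2
  exact mul_left_cancel₀ (by exact_mod_cast j.factorial_ne_zero) h2

private lemma newton_gfun (p j N m : ℕ) (hN : j < N) :
    ((p * m).choose j : ℤ) =
      ∑ t ∈ range N, (m.choose t : ℤ) * ((fwdDiff 1)^[t] (gfun p j) 0) := by
  have h0 := shift_eq_sum_fwdDiff_iter (1 : ℕ) (gfun p j) m 0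
  have e1 : (0 + m • 1 : ℕ) = m := by simp
  rw [e1] at h0
  have hL : ((p * m).choose j : ℤ) = gfun p j m := rfl
  rw [hL, h0]
  have hM1 : ∑ k ∈ range (m + 1), m.choose k • (fwdDiff 1)^[k] (gfun p j) 0 =
      ∑ k ∈ range (max N (m + 1)), (m.choose k : ℤ) * (fwdDiff 1)^[k] (gfun p j) 0 := by
    rw [show (∑ k ∈ range (m + 1), m.choose k • (fwdDiff 1)^[k] (gfun p j) 0) =
        ∑ k ∈ range (m + 1), (m.choose k : ℤ) * (fwdDiff 1)^[k] (gfun p j) 0 from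
      Finset.sum_congr rfl fun k _ => nsmul_eq_mul _ _]
    refine Finset.sum_subset (Finset.range_subset_range.mpr (le_max_right _ _)) ?_
    intro k hk hk2
    have hmk : m < k := by
      have := Finset.mem_range.not.mp hk2
      omega
    simp [Nat.choose_eq_zero_of_lt hmk]
  have hM2 : ∑ k ∈ range N, (m.choose k : ℤ) * (fwdDiff 1)^[k] (gfun p j) 0 =
      ∑ k ∈ range (max N (m + 1)), (m.choose k : ℤ) * (fwdDiff 1)^[k] (gfun p j) 0 := by
    refine Finset.sum_subset (Finset.range_subset_range.mpr (le_max_left _ _)) ?_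
    intro k hk hk2
    have hjk : j < k := by
      have := Finset.mem_range.not.mp hk2
      omega
    rw [fwdDiff_iter_gfun_zero p j k hjk]
    simp
  rw [hM1, ← hM2]



private noncomputable def pT (p n : ℕ) : Finset (Perm (Fin n)) :=
  @Finset.filter _ (fun σ => ∃ k, orderOf σ = p ^ k) (Classical.decPred _) Finset.univ

private lemma mem_pT {p n : ℕ} {σ : Perm (Fin n)} : σ ∈ pT p n ↔ ∃ k, orderOf σ = p ^ k := by
  classical
  simp [pT]

private lemma hcount_eq (p n : ℕ) : hcount p n = (pT p n).card := by
  classical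
  rw [hcount, Nat.card_eq_fintype_card, Fintype.card_subtype]
  congr 1

private def fixSet {n : ℕ} (σ : Perm (Fin n)) : Finset (Fin n) :=
  Finset.univ.filter (fun x => σ x = x)

private lemma mem_fixSet {n : ℕ} {σ : Perm (Fin n)} {x : Fin n} :
    x ∈ fixSet σ ↔ σ x = x := by simp [fixSet]

/-- A multiplicative version of `Equiv.permCongr`. -/
private def permCongrMul {α β : Type*} (e : α ≃ β) : Perm α ≃* Perm β :=
  { Equiv.permCongr e with
    map_mul' := fun σ τ => by
      ext x
      simp [Equiv.permCongr_apply, Perm.mul_apply] }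

private lemma orderOf_permCongrMul {α β : Type*} (e : α ≃ β) (σ : Perm α) :
    orderOf (permCongrMul e σ) = orderOf σ :=
  orderOf_injective (permCongrMul e).toMonoidHom (permCongrMul e).injective σ

private lemma card_fixing (p n : ℕ) (J : Finset (Fin n)) :
    ((pT p n).filter (fun σ => J ⊆ fixSet σ)).card = hcount p (n - J.card) := by
  classical
  -- the subtype of permutations of the complement
  have hcard : Fintype.card {x : Fin n // x ∉ J} = n - J.card := by
    have h1 := Fintype.card_subtype_compl (fun x : Fin n => x ∈ J)
    simpa [Fintype.card_coe] using h1
  -- orderOf is preserved by ofSubtype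
  have hord : ∀ τ : Perm {x : Fin n // x ∉ J},
      orderOf (Equiv.Perm.ofSubtype τ) = orderOf τ := by
    intro τ
    refine orderOf_injective (Equiv.Perm.ofSubtype) ?_ τ
    intro f g hfg
    apply Equiv.ext
    intro x
    have h1 := Equiv.Perm.ofSubtype_apply_coe f x
    have h2 := Equiv.Perm.ofSubtype_apply_coe g x
    rw [hfg] at h1
    exact Subtype.ext (h1.symm.trans h2)
  -- the main equivalence
  have E : {σ : Perm (Fin n) // (∃ k, orderOf σ = p ^ k) ∧ ∀ x ∈ J, σ x = x} ≃
      {τ : Perm {x : Fin n // x ∉ J} // ∃ k, orderOf τ = p ^ k} := by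
    refine ⟨fun σ => ?_, fun τ => ?_, ?_, ?_⟩
    · obtain ⟨σ, hσ, hJ⟩ := σ
      have hq : ∀ x : Fin n, (x ∉ J) ↔ (σ x ∉ J) := by
        intro x
        constructor
        · intro hx hσx
          exact hx (by
            have := hJ (σ x) hσx
            have hxx : σ x = x := σ.injective this
            rwa [← hxx])
        · intro hσx hx
          exact hσx (by rw [hJ x hx]; exact hx)
      have hq' : ∀ x : Fin n, (σ x ∉ J) ↔ (x ∉ J) := fun x => (hq x).symm
      refine ⟨σ.subtypePerm hq', ?_⟩
      have hof : Equiv.Perm.ofSubtype (σ.subtypePerm hq') = σ :=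
        Equiv.Perm.ofSubtype_subtypePerm (p := fun x => x ∉ J) hq' (fun x hx => by
          by_contra hmem
          exact hx (hJ x hmem))
      obtain ⟨k, hk⟩ := hσ
      exact ⟨k, by rw [← hord (σ.subtypePerm hq'), hof, hk]⟩
    · obtain ⟨τ, hτ⟩ := τ
      refine ⟨Equiv.Perm.ofSubtype τ, ?_, ?_⟩
      · obtain ⟨k, hk⟩ := hτ
        exact ⟨k, by rw [hord τ, hk]⟩
      · intro x hx
        exact Equiv.Perm.ofSubtype_apply_of_not_mem τ (not_not.mpr hx)
    · rintro ⟨σ, hσ, hJ⟩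
      apply Subtype.ext
      exact Equiv.Perm.ofSubtype_subtypePerm (p := fun x => x ∉ J) _ (fun x hx => by
        by_contra hmem
        exact hx (hJ x hmem))
    · rintro ⟨τ, hτ⟩
      apply Subtype.ext
      exact Equiv.Perm.subtypePerm_ofSubtype τ
  -- counting
  have e2 : {x : Fin n // x ∉ J} ≃ Fin (n - J.card) := Fintype.equivFinOfCardEq hcard
  have E2 : {τ : Perm {x : Fin n // x ∉ J} // ∃ k, orderOf τ = p ^ k} ≃
      {τ : Perm (Fin (n - J.card)) // ∃ k, orderOf τ = p ^ k} := by
    refine Equiv.subtypeEquiv (permCongrMul e2).toEquiv (fun τ => ?_)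
    constructor
    · rintro ⟨k, hk⟩
      exact ⟨k, by rw [show ((permCongrMul e2).toEquiv τ) = permCongrMul e2 τ from rfl,
        orderOf_permCongrMul, hk]⟩
    · rintro ⟨k, hk⟩
      refine ⟨k, ?_⟩
      rw [show ((permCongrMul e2).toEquiv τ) = permCongrMul e2 τ from rfl,
        orderOf_permCongrMul] at hk
      exact hk
  have E0 : {σ : Perm (Fin n) // σ ∈ (pT p n).filter (fun σ => J ⊆ fixSet σ)} ≃
      {σ : Perm (Fin n) // (∃ k, orderOf σ = p ^ k) ∧ ∀ x ∈ J, σ x = x} := by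
    refine Equiv.subtypeEquivRight (fun σ => ?_)
    rw [Finset.mem_filter, mem_pT]
    constructor
    · rintro ⟨h1, h2⟩
      exact ⟨h1, fun x hx => mem_fixSet.mp (h2 hx)⟩
    · rintro ⟨h1, h2⟩
      exact ⟨h1, fun x hx => mem_fixSet.mpr (h2 x hx)⟩
  calc ((pT p n).filter (fun σ => J ⊆ fixSet σ)).card
      = Nat.card {σ : Perm (Fin n) // σ ∈ (pT p n).filter (fun σ => J ⊆ fixSet σ)} := by
        rw [Nat.card_eq_fintype_card, Fintype.card_coe]
    _ = Nat.card {τ : Perm (Fin (n - J.card)) // ∃ k, orderOf τ = p ^ k} :=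
        Nat.card_congr ((E0.trans E).trans E2)
    _ = hcount p (n - J.card) := rfl

private lemma L1 (p n j : ℕ) :
    ∑ σ ∈ pT p n, ((fixSet σ).card.choose j) = n.choose j * hcount p (n - j) := by
  classical
  have step1 : ∀ σ ∈ pT p n, (fixSet σ).card.choose j =
      ((Finset.univ.powersetCard j).filter (fun J : Finset (Fin n) => J ⊆ fixSet σ)).card := by
    intro σ _
    have : (Finset.univ.powersetCard j).filter (fun J : Finset (Fin n) => J ⊆ fixSet σ) =
        (fixSet σ).powersetCard j := by
      ext J
      simp only [Finset.mem_filter, Finset.mem_powersetCard]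
      constructor
      · rintro ⟨⟨_, h2⟩, h3⟩; exact ⟨h3, h2⟩
      · rintro ⟨h1, h2⟩; exact ⟨⟨Finset.subset_univ J, h2⟩, h1⟩
    rw [this, Finset.card_powersetCard]
  rw [Finset.sum_congr rfl step1]
  have step2 : ∑ σ ∈ pT p n,
      ((Finset.univ.powersetCard j).filter (fun J : Finset (Fin n) => J ⊆ fixSet σ)).card =
      ∑ J ∈ Finset.univ.powersetCard j,
        ((pT p n).filter (fun σ => J ⊆ fixSet σ)).card := by
    simp only [Finset.card_filter]
    exact Finset.sum_comm
  rw [step2]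
  have step3 : ∀ J ∈ (Finset.univ : Finset (Fin n)).powersetCard j,
      ((pT p n).filter (fun σ => J ⊆ fixSet σ)).card = hcount p (n - j) := by
    intro J hJ
    have hJc : J.card = j := (Finset.mem_powersetCard.mp hJ).2
    rw [card_fixing, hJc]
  rw [Finset.sum_congr rfl step3, Finset.sum_const, Finset.card_powersetCard, Finset.card_univ,
    Fintype.card_fin, smul_eq_mul]

private lemma fixSet_card_add_support (n : ℕ) (σ : Perm (Fin n)) :
    (fixSet σ).card + σ.support.card = n := by
  classical
  have hsup : σ.support = Finset.univ.filter (fun x => ¬ σ x = x) := by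
    ext x
    simp [Equiv.Perm.mem_support]
  have h := Finset.card_filter_add_card_filter_not
    (s := (Finset.univ : Finset (Fin n))) (p := fun x => σ x = x)
  rw [Finset.card_univ, Fintype.card_fin] at h
  simp only [fixSet]
  rw [hsup]
  convert h using 2

private lemma p_dvd_fix (p n : ℕ) (hp : p.Prime) (hn : p ∣ n) {σ : Perm (Fin n)}
    (hσ : σ ∈ pT p n) : p ∣ (fixSet σ).card := by
  obtain ⟨k, hk⟩ := mem_pT.mp hσ
  have hsup : p ∣ σ.support.card := by
    rw [← Equiv.Perm.sum_cycleType]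
    refine Multiset.dvd_sum ?_
    intro r hr
    have hdvd : r ∣ p ^ k := by
      rw [← hk, ← Equiv.Perm.lcm_cycleType]
      exact Multiset.dvd_lcm hr
    obtain ⟨i, hik, rfl⟩ := (Nat.dvd_prime_pow hp).mp hdvd
    have h2 : 2 ≤ p ^ i := Equiv.Perm.two_le_of_mem_cycleType hr
    have hi : i ≠ 0 := by
      rintro rfl
      simp at h2
    exact dvd_pow_self p hi
  have hfs := fixSet_card_add_support n σ
  have heq : (fixSet σ).card = n - σ.support.card := by omega
  rw [heq]
  exact Nat.dvd_sub hn hsup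

private lemma fixSet_card_le (n : ℕ) (σ : Perm (Fin n)) : (fixSet σ).card ≤ n := by
  have h := Finset.card_filter_le (Finset.univ : Finset (Fin n)) (fun x => σ x = x)
  simpa [Finset.card_univ, fixSet] using h

private lemma eq_one_of_fixSet_card (n : ℕ) (σ : Perm (Fin n)) (h : (fixSet σ).card = n) :
    σ = 1 := by
  have huniv : fixSet σ = Finset.univ := Finset.eq_univ_of_card _ (by simp [h])
  apply Equiv.ext
  intro x
  exact mem_fixSet.mp (by rw [huniv]; exact Finset.mem_univ x)

private lemma one_mem_pT (p n : ℕ) : (1 : Perm (Fin n)) ∈ pT p n :=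
  mem_pT.mpr ⟨0, by simp⟩

private lemma fixSet_one_card (n : ℕ) : (fixSet (1 : Perm (Fin n))).card = n := by
  simp [fixSet, Finset.card_univ]

theorem det_choose_hcount (p : ℕ) (hp : p.Prime) (ℓ : ℕ) (hℓ : 1 ≤ ℓ) :
    Matrix.det (Matrix.of fun i j : Fin ℓ =>
        ((Nat.choose (p * (i + 1)) (j + 1) * hcount p (p * (i + 1) - (j + 1)) : ℕ) : ℤ))
      = (p : ℤ) ^ (ℓ * (ℓ + 1) / 2) := by
  classical
  have hppos : 0 < p := hp.pos
  set V : Matrix (Fin ℓ) (Fin ℓ) ℤ := Matrix.of (fun i t : Fin ℓ =>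
    ∑ σ ∈ pT p (p * ((i : ℕ) + 1)),
      ((((fixSet σ).card / p).choose ((t : ℕ) + 1) : ℕ) : ℤ)) with hVdef
  set U : Matrix (Fin ℓ) (Fin ℓ) ℤ := Matrix.of (fun t j : Fin ℓ =>
    (fwdDiff 1)^[(t : ℕ) + 1] (gfun p ((j : ℕ) + 1)) 0) with hUdef
  -- the matrix factorization
  have entry : ∀ i j : Fin ℓ,
      ((Nat.choose (p * ((i : ℕ) + 1)) ((j : ℕ) + 1) *
        hcount p (p * ((i : ℕ) + 1) - ((j : ℕ) + 1)) : ℕ) : ℤ) = ∑ t : Fin ℓ, V i t * U t j := by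
    intro i j
    rw [← L1 p (p * ((i : ℕ) + 1)) ((j : ℕ) + 1)]
    push_cast
    -- now : ∑ σ, (C(fix σ, j+1) : ℤ) = ∑ t, V i t * U t j
    have hswap : ∑ t : Fin ℓ, V i t * U t j =
        ∑ σ ∈ pT p (p * ((i : ℕ) + 1)), ∑ t : Fin ℓ,
          ((((fixSet σ).card / p).choose ((t : ℕ) + 1) : ℕ) : ℤ) *
            (fwdDiff 1)^[(t : ℕ) + 1] (gfun p ((j : ℕ) + 1)) 0 := by
      rw [Finset.sum_comm]
      refine Finset.sum_congr rfl fun t _ => ?_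
      rw [hVdef, hUdef]
      simp only [Matrix.of_apply]
      rw [Finset.sum_mul]
    rw [hswap]
    refine Finset.sum_congr rfl fun σ hσ => ?_
    have hdvd : p ∣ (fixSet σ).card := p_dvd_fix p _ hp ⟨(i : ℕ) + 1, rfl⟩ hσ
    have hmul : p * ((fixSet σ).card / p) = (fixSet σ).card := Nat.mul_div_cancel' hdvd
    have hnewton := newton_gfun p ((j : ℕ) + 1) (ℓ + 1) ((fixSet σ).card / p)
      (by omega)
    rw [hmul] at hnewton
    rw [hnewton, Finset.sum_range_succ']
    have h00 : ((((fixSet σ).card / p).choose 0 : ℕ) : ℤ) *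
        (fwdDiff 1)^[0] (gfun p ((j : ℕ) + 1)) 0 = 0 := by
      simp only [Function.iterate_zero, id_eq, gfun, Nat.mul_zero, Nat.choose_zero_succ]
      simp
    rw [h00, add_zero, ← Fin.sum_univ_eq_sum_range
      (fun t => ((((fixSet σ).card / p).choose (t + 1) : ℕ) : ℤ) *
        (fwdDiff 1)^[t + 1] (gfun p ((j : ℕ) + 1)) 0) ℓ]
  have hfactor : (Matrix.of fun i j : Fin ℓ =>
      ((Nat.choose (p * (i + 1)) (j + 1) * hcount p (p * (i + 1) - (j + 1)) : ℕ) : ℤ)) = V * U := by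
    ext i j
    rw [Matrix.mul_apply, Matrix.of_apply]
    exact entry i j
  rw [hfactor, Matrix.det_mul]
  -- V is lower triangular with 1's on the diagonal
  have hdetV : V.det = 1 := by
    have htri : V.BlockTriangular OrderDual.toDual := by
      intro i t hti
      have hit : (i : ℕ) < (t : ℕ) := hti
      rw [hVdef]
      simp only [Matrix.of_apply]
      refine Finset.sum_eq_zero fun σ hσ => ?_
      have hle : (fixSet σ).card / p ≤ (i : ℕ) + 1 := by
        have h1 := fixSet_card_le (p * ((i : ℕ) + 1)) σ
        have h2 := Nat.div_le_div_right (c := p) h1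
        rwa [Nat.mul_div_cancel_left _ hppos] at h2
      rw [Nat.choose_eq_zero_of_lt (by omega), Nat.cast_zero]
    rw [Matrix.det_of_lowerTriangular V htri]
    refine Finset.prod_eq_one fun i _ => ?_
    rw [hVdef]
    simp only [Matrix.of_apply]
    rw [Finset.sum_eq_single_of_mem 1 (one_mem_pT p _)]
    · rw [fixSet_one_card, Nat.mul_div_cancel_left _ hppos, Nat.choose_self, Nat.cast_one]
    · intro σ hσ hσ1
      have hlt : (fixSet σ).card < p * ((i : ℕ) + 1) := by
        rcases lt_or_eq_of_le (fixSet_card_le (p * ((i : ℕ) + 1)) σ) with h | h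
        · exact h
        · exact absurd (eq_one_of_fixSet_card _ σ h) hσ1
      have hdvd : p ∣ (fixSet σ).card := p_dvd_fix p _ hp ⟨(i : ℕ) + 1, rfl⟩ hσ
      have hq : (fixSet σ).card / p < (i : ℕ) + 1 := by
        obtain ⟨q, hq'⟩ := hdvd
        rw [hq'] at hlt ⊢
        rw [Nat.mul_div_cancel_left _ hppos]
        exact lt_of_mul_lt_mul_left hlt (le_of_lt hppos)
      rw [Nat.choose_eq_zero_of_lt hq, Nat.cast_zero]
  -- U is upper triangular with p^(t+1) on the diagonal
  have hdetU : U.det = (p : ℤ) ^ (ℓ * (ℓ + 1) / 2) := by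
    have htri : U.BlockTriangular id := by
      intro i j hji
      have hij : (j : ℕ) < (i : ℕ) := hji
      rw [hUdef]
      simp only [Matrix.of_apply]
      rw [fwdDiff_iter_gfun_zero p ((j : ℕ) + 1) ((i : ℕ) + 1) (by omega)]
      simp
    rw [Matrix.det_of_upperTriangular htri]
    have hdiag : ∀ i : Fin ℓ, U i i = (p : ℤ) ^ ((i : ℕ) + 1) := by
      intro i
      rw [hUdef]
      simp only [Matrix.of_apply]
      rw [fwdDiff_iter_gfun_self p ((i : ℕ) + 1)]
    rw [Finset.prod_congr rfl fun i _ => hdiag i, Finset.prod_pow_eq_pow_sum]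
    congr 1
    have hA : ∑ i : Fin ℓ, ((i : ℕ) + 1) = ∑ i ∈ range ℓ, (i + 1) :=
      Fin.sum_univ_eq_sum_range (fun i => i + 1) ℓ
    have hB : ∑ i ∈ range (ℓ + 1), i = (∑ i ∈ range ℓ, (i + 1)) + 0 :=
      Finset.sum_range_succ' (fun i => i) ℓ
    have hC := Finset.sum_range_id_mul_two (ℓ + 1)
    have hC' : (∑ i ∈ range (ℓ + 1), i) * 2 = ℓ * (ℓ + 1) := by
      rw [hC, Nat.add_sub_cancel, Nat.mul_comm]
    omega
  rw [hdetV, hdetU, one_mul]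
end

section
/- Let p be a prime and u_n the coefficients of the Artin-Hasse exponential exp(Σ_{k≥0} x^{p^k}/p^k) = Σ u_n x^n, with u_n = 0 for n < 0. For any ℓ ≥ 1, det_{1≤i,j≤ℓ}(u_{pi - j}) = ∏_{k=1}^ℓ (k! · p^k / (pk)!). -/
open PowerSeries Classical

/-- The inner series `∑_{k≥0} x^{p^k}/p^k` over `ℚ`. -/
noncomputable def AHinner (p : ℕ) : PowerSeries ℚ :=
  PowerSeries.mk fun n => if ∃ k, n = p ^ k then (1 : ℚ) / n else 0

/-- The Artin-Hasse exponential `exp(∑_{k≥0} x^{p^k}/p^k)`, defined via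
`exp f = ∑_m f^m / m!` (the inner sum is finite in each coefficient since
`AHinner p` has zero constant term). -/
noncomputable def AHexp (p : ℕ) : PowerSeries ℚ :=
  PowerSeries.mk fun n =>
    ∑ m ∈ Finset.range (n + 1), PowerSeries.coeff n ((AHinner p) ^ m) / (m.factorial : ℚ)

/-- The coefficients `u_n` of the Artin-Hasse exponential, with `u_n = 0` for `n < 0`. -/
noncomputable def AHcoeff (p : ℕ) (n : ℤ) : ℚ :=
  if n < 0 then 0 else PowerSeries.coeff n.toNat (AHexp p)

namespace AH

theorem constantCoeff_inner (p : ℕ) (hp : p.Prime) : constantCoeff (AHinner p) = 0 := by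
  rw [← coeff_zero_eq_constantCoeff_apply, AHinner, coeff_mk]
  have : ¬ ∃ k, 0 = p ^ k := by
    rintro ⟨k, hk⟩
    exact (pow_pos hp.pos k).ne' hk.symm
  simp [this]

theorem coeff_inner_pow (p : ℕ) (hp : p.Prime) {n m : ℕ} (h : n < m) :
    coeff n ((AHinner p) ^ m) = 0 := by
  have hdvd : (X : ℚ⟦X⟧) ^ m ∣ (AHinner p) ^ m :=
    pow_dvd_pow_of_dvd (X_dvd_iff.mpr (constantCoeff_inner p hp)) m
  exact (X_pow_dvd_iff.mp hdvd) n h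

/-- truncated exponential sums -/
noncomputable def EN (p N : ℕ) : ℚ⟦X⟧ :=
  ∑ m ∈ Finset.range N, ((m.factorial : ℚ))⁻¹ • (AHinner p) ^ m

theorem coeff_AHexp (p n : ℕ) :
    coeff n (AHexp p) = ∑ m ∈ Finset.range (n + 1), coeff n ((AHinner p) ^ m) / (m.factorial : ℚ) := by
  rw [AHexp, coeff_mk]

theorem coeff_AHexp_eq_EN (p : ℕ) (hp : p.Prime) {n N : ℕ} (h : n < N) :
    coeff n (AHexp p) = coeff n (EN p N) := by
  rw [coeff_AHexp, EN, map_sum]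
  calc ∑ m ∈ Finset.range (n + 1), coeff n ((AHinner p) ^ m) / (m.factorial : ℚ)
      = ∑ m ∈ Finset.range (n + 1), coeff n (((m.factorial : ℚ))⁻¹ • (AHinner p) ^ m) := by
        simp [coeff_smul, div_eq_inv_mul, smul_eq_mul]
    _ = ∑ m ∈ Finset.range N, coeff n (((m.factorial : ℚ))⁻¹ • (AHinner p) ^ m) := by
        apply Finset.sum_subset (Finset.range_subset_range.mpr h)
        intro m _ hm
        rw [Finset.mem_range, not_lt] at hm
        rw [coeff_smul, coeff_inner_pow p hp (by omega), smul_zero]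

theorem der_EN (p N : ℕ) :
    PowerSeries.derivative ℚ (EN p (N + 1)) =
      PowerSeries.derivative ℚ (AHinner p) * EN p N := by
  rw [EN, map_sum, Finset.sum_range_succ']
  have h0 : PowerSeries.derivative ℚ (((Nat.factorial 0 : ℚ))⁻¹ • (AHinner p) ^ 0) = 0 := by
    simp
  rw [h0, add_zero, EN, Finset.mul_sum]
  apply Finset.sum_congr rfl
  intro m _
  rw [Derivation.map_smul, Derivation.leibniz_pow, Nat.add_sub_cancel]
  rw [smul_eq_mul (α := ℚ⟦X⟧), ← Nat.cast_smul_eq_nsmul ℚ, smul_smul, mul_smul_comm]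
  have hs : ((m + 1).factorial : ℚ)⁻¹ * ((m + 1 : ℕ) : ℚ) = ((m.factorial : ℚ))⁻¹ := by
    rw [Nat.factorial_succ]
    push_cast
    rw [mul_inv]
    field_simp
  rw [hs]
  congr 1
  ring

theorem coeff_mul_congr {n : ℕ} {f g g' : ℚ⟦X⟧}
    (h : ∀ b ≤ n, coeff b g = coeff b g') :
    coeff n (f * g) = coeff n (f * g') := by
  rw [coeff_mul, coeff_mul]
  apply Finset.sum_congr rfl
  intro x hx
  rw [Finset.HasAntidiagonal.mem_antidiagonal] at hx
  rw [h x.2 (by omega)]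

theorem ode (p : ℕ) (hp : p.Prime) :
    PowerSeries.derivative ℚ (AHexp p) =
      PowerSeries.derivative ℚ (AHinner p) * AHexp p := by
  ext n
  rw [coeff_derivative, coeff_AHexp_eq_EN p hp (show n + 1 < n + 2 by omega),
    ← coeff_derivative, der_EN]
  exact coeff_mul_congr fun b hb => (coeff_AHexp_eq_EN p hp (by omega)).symm

/-- `exp(-X)` -/
noncomputable def G : ℚ⟦X⟧ := rescale (-1 : ℚ) (exp ℚ)

theorem coeff_G (n : ℕ) : coeff n G = (-1) ^ n * (1 / (n.factorial : ℚ)) := by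
  rw [G, coeff_rescale, coeff_exp]
  simp [Algebra.algebraMap_self]

theorem der_G : PowerSeries.derivative ℚ G = -G := by
  ext n
  rw [coeff_derivative, map_neg, coeff_G, coeff_G, Nat.factorial_succ]
  push_cast
  have h1 : ((n.factorial : ℚ)) ≠ 0 := Nat.cast_ne_zero.mpr n.factorial_ne_zero
  field_simp
  ring

noncomputable def F (p : ℕ) : ℚ⟦X⟧ := AHexp p * G

theorem der_F (p : ℕ) (hp : p.Prime) :
    PowerSeries.derivative ℚ (F p) =
      (PowerSeries.derivative ℚ (AHinner p) - 1) * F p := by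
  rw [F, Derivation.leibniz, der_G, ode p hp, smul_eq_mul, smul_eq_mul]
  ring

theorem coeff_T_key (p : ℕ) (hp : p.Prime) (a : ℕ)
    (h : coeff a (PowerSeries.derivative ℚ (AHinner p) - 1) ≠ 0) : p ∣ (a + 1) := by
  rw [map_sub, coeff_derivative, AHinner, coeff_mk, coeff_one] at h
  rcases Nat.eq_zero_or_pos a with rfl | ha
  · exfalso
    apply h
    have : ∃ k, 0 + 1 = p ^ k := ⟨0, by simp⟩
    simp [this]
  · rw [if_neg (show ¬ a = 0 by omega)] at h
    by_cases hk : ∃ k, a + 1 = p ^ k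
    · obtain ⟨k, hk⟩ := hk
      rcases Nat.eq_zero_or_pos k with rfl | hkpos
      · exfalso; simp at hk; omega
      · rw [hk]
        exact dvd_pow_self p (by omega)
    · exfalso; apply h; simp [hk]

theorem vanish (p : ℕ) (hp : p.Prime) : ∀ n, ¬ p ∣ n → coeff n (F p) = 0 := by
  intro n
  induction n using Nat.strong_induction_on with
  | _ n ih =>
    intro hn
    have hn0 : n ≠ 0 := by rintro rfl; exact hn (dvd_zero p)
    have key : (coeff n (F p)) * (n : ℚ) = coeff (n - 1) (PowerSeries.derivative ℚ (F p)) := by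
      have e1 : n - 1 + 1 = n := by omega
      rw [coeff_derivative, e1, ← Nat.cast_one (R := ℚ), ← Nat.cast_add, e1]
    rw [der_F p hp, coeff_mul] at key
    have hz : ∀ x ∈ Finset.HasAntidiagonal.antidiagonal (n - 1),
        coeff x.1 (PowerSeries.derivative ℚ (AHinner p) - 1) * coeff x.2 (F p) = 0 := by
      rintro ⟨a, b⟩ hab
      rw [Finset.HasAntidiagonal.mem_antidiagonal] at hab
      by_cases hT : coeff a (PowerSeries.derivative ℚ (AHinner p) - 1) = 0
      · rw [hT, zero_mul]
      · have hdvd := coeff_T_key p hp a hT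
        have hblt : b < n := by omega
        have hbnd : ¬ p ∣ b := by
          intro hpb
          exact hn (by have : a + 1 + b = n := by omega
                       rw [← this]; exact Nat.dvd_add hdvd hpb)
        rw [ih b hblt hbnd, mul_zero]
    rw [Finset.sum_eq_zero hz] at key
    have hnq : (n : ℚ) ≠ 0 := Nat.cast_ne_zero.mpr hn0
    exact (mul_eq_zero.mp key).resolve_right hnq

/-- `1/t!` for integer `t`, zero for negative `t`. -/
noncomputable def e (t : ℤ) : ℚ := if t < 0 then 0 else 1 / ((t.toNat).factorial : ℚ)

theorem E_eq (p : ℕ) : AHexp p = F p * exp ℚ := by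
  rw [F, mul_assoc, mul_comm G (exp ℚ),
    show (G : ℚ⟦X⟧) = evalNegHom (exp ℚ) from rfl, exp_mul_exp_neg_eq_one, mul_one]

theorem coeff_F_zero (p : ℕ) : coeff 0 (F p) = 1 := by
  have h1 : coeff 0 (AHexp p) = 1 := by
    rw [coeff_AHexp]
    simp
  rw [F, coeff_mul]
  simp [h1, coeff_G]

theorem u_expansion (p : ℕ) (hp : p.Prime) (n : ℕ) :
    coeff n (AHexp p) =
      ∑ m ∈ Finset.range (n + 1), coeff (p * m) (F p) * e ((n : ℤ) - (p * m : ℕ)) := by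
  rw [E_eq, coeff_mul, Finset.Nat.sum_antidiagonal_eq_sum_range_succ_mk]
  have hterm : ∀ a ∈ Finset.range (n + 1),
      coeff a (F p) * coeff (n - a) (exp ℚ) = coeff a (F p) * e ((n : ℤ) - (a : ℕ)) := by
    intro a ha
    rw [Finset.mem_range] at ha
    rw [coeff_exp, e, if_neg (by omega), show ((n : ℤ) - (a : ℕ)).toNat = n - a by omega]
    simp
  rw [Finset.sum_congr rfl hterm]
  -- restrict both sides to the nonzero terms and biject
  have hL : ∑ a ∈ Finset.range (n + 1), coeff a (F p) * e ((n : ℤ) - (a : ℕ))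
      = ∑ a ∈ (Finset.range (n + 1)).filter (fun a => p ∣ a),
          coeff a (F p) * e ((n : ℤ) - (a : ℕ)) := by
    symm
    apply Finset.sum_filter_of_ne
    intro a _ hne
    by_contra hnd
    rw [vanish p hp a hnd, zero_mul] at hne
    exact hne rfl
  have hR : ∑ m ∈ Finset.range (n + 1), coeff (p * m) (F p) * e ((n : ℤ) - (p * m : ℕ))
      = ∑ m ∈ (Finset.range (n + 1)).filter (fun m => p * m ≤ n),
          coeff (p * m) (F p) * e ((n : ℤ) - (p * m : ℕ)) := by
    symm
    apply Finset.sum_filter_of_ne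
    intro m _ hne
    by_contra hnd
    rw [e, if_pos (by push_cast; omega), mul_zero] at hne
    exact hne rfl
  rw [hL, hR]
  apply Finset.sum_nbij' (fun a => a / p) (fun m => p * m)
  · intro a ha
    simp only [Finset.mem_filter, Finset.mem_range] at ha ⊢
    obtain ⟨c, rfl⟩ := ha.2
    rw [Nat.mul_div_cancel_left c hp.pos]
    constructor
    · have : c ≤ p * c := Nat.le_mul_of_pos_left c hp.pos
      omega
    · omega
  · intro m hm
    simp only [Finset.mem_filter, Finset.mem_range] at hm ⊢
    exact ⟨by omega, ⟨m, rfl⟩⟩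
  · intro a ha
    simp only [Finset.mem_filter, Finset.mem_range] at ha
    obtain ⟨c, rfl⟩ := ha.2
    rw [Nat.mul_div_cancel_left c hp.pos]
  · intro m hm
    rw [Nat.mul_div_cancel_left m hp.pos]
  · intro a ha
    simp only [Finset.mem_filter, Finset.mem_range] at ha
    obtain ⟨c, rfl⟩ := ha.2
    rw [Nat.mul_div_cancel_left c hp.pos]

noncomputable def Cm (p ℓ : ℕ) : Matrix (Fin ℓ) (Fin ℓ) ℚ :=
  Matrix.of fun i i' => if (i' : ℕ) ≤ (i : ℕ) then coeff (p * ((i : ℕ) - (i' : ℕ))) (F p) else 0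

noncomputable def Bm (p ℓ : ℕ) : Matrix (Fin ℓ) (Fin ℓ) ℚ :=
  Matrix.of fun i' j => e ((p : ℤ) * (((i' : ℕ) : ℤ) + 1) - (((j : ℕ) : ℤ) + 1))

theorem det_Cm (p ℓ : ℕ) : (Cm p ℓ).det = 1 := by
  rw [Matrix.det_of_lowerTriangular (Cm p ℓ)
    (by intro i j hij
        rw [OrderDual.toDual_lt_toDual] at hij
        simp only [Cm, Matrix.of_apply]
        rw [if_neg (fun hc => (not_le.mpr hij) (by exact_mod_cast hc))])]
  apply Finset.prod_eq_one
  intro i _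
  simp [Cm, coeff_F_zero]

theorem factorization (p ℓ : ℕ) (hp : p.Prime) (i j : Fin ℓ) :
    AHcoeff p ((p : ℤ) * (((i : ℕ) : ℤ) + 1) - (((j : ℕ) : ℤ) + 1)) = (Cm p ℓ * Bm p ℓ) i j := by
  set N : ℤ := (p : ℤ) * (((i : ℕ) : ℤ) + 1) - (((j : ℕ) : ℤ) + 1) with hN
  rw [Matrix.mul_apply]
  by_cases hneg : N < 0
  · rw [AHcoeff, if_pos hneg]
    symm; apply Finset.sum_eq_zero
    intro i' _
    by_cases hle : (i' : ℕ) ≤ (i : ℕ)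
    · have harg : (p : ℤ) * (((i' : ℕ) : ℤ) + 1) - (((j : ℕ) : ℤ) + 1) < 0 := by
        have hmono : (p : ℤ) * (((i' : ℕ) : ℤ) + 1) ≤ (p : ℤ) * (((i : ℕ) : ℤ) + 1) := by
          apply mul_le_mul_of_nonneg_left (by exact_mod_cast by omega) (by positivity)
        omega
      simp only [Cm, Bm, Matrix.of_apply, e, if_pos harg, mul_zero]
    · simp only [Cm, Matrix.of_apply, if_neg hle, zero_mul]
  · push_neg at hneg
    rw [AHcoeff, if_neg (not_lt.mpr hneg)]
    set n := N.toNat with hn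
    have hNn : (n : ℤ) = N := Int.toNat_of_nonneg hneg
    set s : ℕ → ℚ := fun m => coeff (p * m) (F p) * e ((n : ℤ) - (p * m : ℕ)) with hs
    have hzero : ∀ m, n < p * m → s m = 0 := by
      intro m hm
      rw [hs]
      simp only []
      rw [e, if_pos (by push_cast; omega), mul_zero]
    rw [u_expansion p hp n]
    set g : ℕ → ℚ := fun i' =>
      if i' ≤ (i : ℕ) then
        coeff (p * ((i : ℕ) - i')) (F p) * e ((p : ℤ) * ((i' : ℤ) + 1) - (((j : ℕ) : ℤ) + 1))
      else 0 with hg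
    have hfin : ∑ i' : Fin ℓ, Cm p ℓ i i' * Bm p ℓ i' j = ∑ i' ∈ Finset.range ℓ, g i' := by
      rw [← Fin.sum_univ_eq_sum_range]
      apply Finset.sum_congr rfl
      intro i' _
      simp only [Cm, Bm, Matrix.of_apply, hg]
      by_cases h : (i' : ℕ) ≤ (i : ℕ)
      · rw [if_pos h, if_pos h]
      · rw [if_neg h, if_neg h, zero_mul]
    have hsmall : ∑ i' ∈ Finset.range ℓ, g i' = ∑ i' ∈ Finset.range ((i : ℕ) + 1), g i' := by
      symm
      apply Finset.sum_subset (Finset.range_subset_range.mpr (by omega))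
      intro m _ hm
      rw [Finset.mem_range] at hm
      rw [hg]; simp only []
      rw [if_neg (by omega)]
    have hreflect : ∑ i' ∈ Finset.range ((i : ℕ) + 1), g i'
        = ∑ m ∈ Finset.range ((i : ℕ) + 1), s m := by
      rw [← Finset.sum_range_reflect g ((i : ℕ) + 1)]
      apply Finset.sum_congr rfl
      intro m hm
      rw [Finset.mem_range] at hm
      have hmi : m ≤ (i : ℕ) := by omega
      rw [hg, hs]; simp only []
      rw [if_pos (by omega)]
      have h1 : (i : ℕ) + 1 - 1 - m = (i : ℕ) - m := by omega
      have h2 : (i : ℕ) - ((i : ℕ) - m) = m := by omega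
      rw [h1, h2]
      congr 2
      rw [hNn, hN]
      push_cast [Nat.cast_sub hmi]
      ring
    have hext1 : ∑ m ∈ Finset.range (n + 1), s m
        = ∑ m ∈ Finset.range (n + (i : ℕ) + 2), s m := by
      apply Finset.sum_subset (Finset.range_subset_range.mpr (by omega))
      intro m _ hm
      rw [Finset.mem_range] at hm
      have : m ≤ p * m := Nat.le_mul_of_pos_left m hp.pos
      exact hzero m (by omega)
    have hext2 : ∑ m ∈ Finset.range ((i : ℕ) + 1), s m
        = ∑ m ∈ Finset.range (n + (i : ℕ) + 2), s m := by
      apply Finset.sum_subset (Finset.range_subset_range.mpr (by omega))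
      intro m _ hm
      rw [Finset.mem_range] at hm
      apply hzero
      have hmono : p * ((i : ℕ) + 1) ≤ p * m := Nat.mul_le_mul_left p (by omega)
      have hcast : ((p * ((i : ℕ) + 1) : ℕ) : ℤ) = N + (((j : ℕ) : ℤ) + 1) := by
        push_cast; omega
      omega
    calc ∑ m ∈ Finset.range (n + 1), s m
        = ∑ m ∈ Finset.range (n + (i : ℕ) + 2), s m := hext1
      _ = ∑ m ∈ Finset.range ((i : ℕ) + 1), s m := hext2.symm
      _ = ∑ i' ∈ Finset.range ((i : ℕ) + 1), g i' := hreflect.symm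
      _ = ∑ i' ∈ Finset.range ℓ, g i' := hsmall.symm
      _ = ∑ i' : Fin ℓ, Cm p ℓ i i' * Bm p ℓ i' j := hfin.symm


theorem Bm_entry (p ℓ : ℕ) (hp : p.Prime) (i j : Fin ℓ) :
    e ((p : ℤ) * (((i : ℕ) : ℤ) + 1) - (((j : ℕ) : ℤ) + 1))
      = (((p * ((i : ℕ) + 1) - 1).factorial : ℚ))⁻¹
        * (((p * ((i : ℕ) + 1) - 1).descFactorial (j : ℕ) : ℕ) : ℚ) := by
  set a : ℕ := p * ((i : ℕ) + 1) - 1 with ha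
  have hpa : p * ((i : ℕ) + 1) = a + 1 := by
    have h1 : 0 < p * ((i : ℕ) + 1) := Nat.mul_pos hp.pos (Nat.succ_pos _)
    omega
  have hcastZ : (p : ℤ) * (((i : ℕ) : ℤ) + 1) = (a : ℤ) + 1 := by exact_mod_cast congrArg (Nat.cast (R := ℤ)) hpa
  by_cases hj : (j : ℕ) ≤ a
  · have harg : (p : ℤ) * (((i : ℕ) : ℤ) + 1) - (((j : ℕ) : ℤ) + 1) = ((a - (j : ℕ) : ℕ) : ℤ) := by
      rw [hcastZ]
      push_cast [Nat.cast_sub hj]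
      ring
    rw [harg, e, if_neg (by exact_mod_cast not_lt.mpr (Int.natCast_nonneg _)), Int.toNat_natCast]
    have hfac := Nat.factorial_mul_descFactorial hj
    have hQ : (((a - (j : ℕ)).factorial : ℚ)) * ((a.descFactorial (j : ℕ) : ℕ) : ℚ)
        = ((a.factorial : ℚ)) := by exact_mod_cast congrArg (Nat.cast (R := ℚ)) hfac
    rw [inv_mul_eq_div, div_eq_div_iff (by exact_mod_cast Nat.factorial_pos _ |>.ne')
      (by exact_mod_cast Nat.factorial_pos _ |>.ne')]
    rw [← hQ]; ring
  · have harg : (p : ℤ) * (((i : ℕ) : ℤ) + 1) - (((j : ℕ) : ℤ) + 1) < 0 := by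
      rw [hcastZ]; omega
    rw [e, if_pos harg, Nat.descFactorial_eq_zero_iff_lt.mpr (by omega)]
    simp

theorem prod_Ioi (ℓ : ℕ) (i : Fin ℓ) :
    ∏ j ∈ Finset.Ioi i, (((j : ℕ) : ℚ) - ((i : ℕ) : ℚ))
      = (((ℓ - 1 - (i : ℕ)).factorial : ℚ)) := by
  have key : ∏ j ∈ Finset.Ioi i, (((j : ℕ) : ℚ) - ((i : ℕ) : ℚ))
      = ∏ t ∈ Finset.range (ℓ - 1 - (i : ℕ)), ((t : ℚ) + 1) := by
    apply Finset.prod_bij' (fun (j : Fin ℓ) (_ : j ∈ Finset.Ioi i) => (j : ℕ) - (i : ℕ) - 1)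
      (fun t (ht : t ∈ Finset.range (ℓ - 1 - (i : ℕ))) =>
        (⟨(i : ℕ) + 1 + t, by rw [Finset.mem_range] at ht; omega⟩ : Fin ℓ))
    case hi =>
      intro j hj
      rw [Finset.mem_Ioi, Fin.lt_def] at hj
      rw [Finset.mem_range]
      have := j.isLt
      omega
    case hj =>
      intro t ht
      rw [Finset.mem_Ioi, Fin.lt_def]
      simp only []
      omega
    case left_inv =>
      intro j hj
      rw [Finset.mem_Ioi, Fin.lt_def] at hj
      apply Fin.ext
      simp
      omega
    case right_inv =>
      intro t ht
      simp only []
      omega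
    case h =>
      intro j hj
      rw [Finset.mem_Ioi, Fin.lt_def] at hj
      have h1 : (i : ℕ) + 1 ≤ (j : ℕ) := hj
      rw [Nat.sub_sub, Nat.cast_sub h1]
      push_cast
      ring
  rw [key]
  have : ∏ t ∈ Finset.range (ℓ - 1 - (i : ℕ)), ((t : ℚ) + 1)
      = ((∏ t ∈ Finset.range (ℓ - 1 - (i : ℕ)), (t + 1) : ℕ) : ℚ) := by
    push_cast
    rfl
  rw [this, Finset.prod_range_add_one_eq_factorial]

theorem det_Bm (p ℓ : ℕ) (hp : p.Prime) :
    (Matrix.of fun i j : Fin ℓ => e ((p : ℤ) * (((i : ℕ) : ℤ) + 1) - (((j : ℕ) : ℤ) + 1))).det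
      = ∏ k ∈ Finset.range ℓ,
          (((k + 1).factorial : ℚ) * (p : ℚ) ^ (k + 1) / ((p * (k + 1)).factorial : ℚ)) := by
  set w : Fin ℓ → ℚ := fun i => ((p * ((i : ℕ) + 1) - 1 : ℕ) : ℚ) with hw
  have hB : (Matrix.of fun i j : Fin ℓ =>
        e ((p : ℤ) * (((i : ℕ) : ℤ) + 1) - (((j : ℕ) : ℤ) + 1)))
      = Matrix.of fun i j : Fin ℓ => (((p * ((i : ℕ) + 1) - 1).factorial : ℚ))⁻¹
          * ((descPochhammer ℚ ((j : ℕ))).eval (w i)) := by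
    ext i j
    rw [Matrix.of_apply, Matrix.of_apply, Bm_entry p ℓ hp i j, hw,
      descPochhammer_eval_eq_descFactorial]
  have hV : (Matrix.of fun i j : Fin ℓ => (descPochhammer ℚ ((j : ℕ))).eval (w i)).det
      = ∏ i : Fin ℓ, ∏ j ∈ Finset.Ioi i, (w j - w i) := by
    rw [← Matrix.det_eval_matrixOfPolynomials_eq_det_vandermonde w
      (fun j => descPochhammer ℚ ((j : ℕ))) (fun j => descPochhammer_natDegree ℚ ((j : ℕ)))
      (fun j => monic_descPochhammer ℚ _), Matrix.det_vandermonde]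
  rw [hB, Matrix.det_mul_column (fun i : Fin ℓ => (((p * ((i : ℕ) + 1) - 1).factorial : ℚ))⁻¹)
      (fun i j : Fin ℓ => (descPochhammer ℚ ((j : ℕ))).eval (w i)),
    show (Matrix.det fun i j : Fin ℓ => (descPochhammer ℚ ((j : ℕ))).eval (w i))
      = (Matrix.of fun i j : Fin ℓ => (descPochhammer ℚ ((j : ℕ))).eval (w i)).det from rfl, hV]
  have hIoi : ∀ i : Fin ℓ, ∏ j ∈ Finset.Ioi i, (w j - w i)
      = (p : ℚ) ^ (ℓ - 1 - (i : ℕ)) * (((ℓ - 1 - (i : ℕ)).factorial : ℚ)) := by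
    intro i
    have hterm : ∀ j ∈ Finset.Ioi i, w j - w i = (p : ℚ) * (((j : ℕ) : ℚ) - ((i : ℕ) : ℚ)) := by
      intro j _
      rw [hw]
      have h1 : 0 < p * ((i : ℕ) + 1) := Nat.mul_pos hp.pos (Nat.succ_pos _)
      have h2 : 0 < p * ((j : ℕ) + 1) := Nat.mul_pos hp.pos (Nat.succ_pos _)
      push_cast [Nat.cast_sub h1, Nat.cast_sub h2]
      ring
    rw [Finset.prod_congr rfl hterm, Finset.prod_mul_distrib, Finset.prod_const, prod_Ioi ℓ i,
      Fin.card_Ioi]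
  rw [Finset.prod_congr rfl (fun i _ => hIoi i)]
  -- now everything is explicit; convert Fin-products to range-products
  rw [Fin.prod_univ_eq_prod_range (fun k => (((p * (k + 1) - 1).factorial : ℚ))⁻¹) ℓ,
    Fin.prod_univ_eq_prod_range (fun k => (p : ℚ) ^ (ℓ - 1 - k) * (((ℓ - 1 - k).factorial : ℚ))) ℓ,
    Finset.prod_range_reflect (fun k => (p : ℚ) ^ k * ((k.factorial : ℚ))) ℓ]
  rw [← Finset.prod_mul_distrib]
  apply Finset.prod_congr rfl
  intro k hk
  rw [Finset.mem_range] at hk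
  have hpk : 0 < p * (k + 1) := Nat.mul_pos hp.pos (Nat.succ_pos _)
  have hfac : ((p * (k + 1)).factorial : ℚ) = (p * (k + 1) : ℕ) * (((p * (k + 1) - 1).factorial : ℚ)) := by
    rw_mod_cast [Nat.mul_factorial_pred hpk.ne']
  have h1 : (((p * (k + 1) - 1).factorial : ℚ)) ≠ 0 := by
    exact_mod_cast (Nat.factorial_pos _).ne'
  have h2 : ((p * (k + 1) : ℕ) : ℚ) ≠ 0 := by
    exact_mod_cast hpk.ne'
  rw [hfac, eq_div_iff (mul_ne_zero h2 h1)]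
  have hre : (((p * (k + 1) - 1).factorial : ℚ))⁻¹ * ((p : ℚ) ^ k * ((k.factorial : ℚ)))
      * (((p * (k + 1) : ℕ) : ℚ) * (((p * (k + 1) - 1).factorial : ℚ)))
      = (p : ℚ) ^ k * ((k.factorial : ℚ)) * ((p * (k + 1) : ℕ) : ℚ)
        * ((((p * (k + 1) - 1).factorial : ℚ))⁻¹ * (((p * (k + 1) - 1).factorial : ℚ))) := by
    ring
  rw [hre, inv_mul_cancel₀ h1, mul_one]
  push_cast [Nat.factorial_succ]
  ring

end AH

theorem det_AHcoeff (p : ℕ) (hp : p.Prime) (ℓ : ℕ) (hℓ : 1 ≤ ℓ) :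
    Matrix.det (Matrix.of fun i j : Fin ℓ =>
        AHcoeff p ((p : ℤ) * ((i : ℤ) + 1) - ((j : ℤ) + 1)))
      = ∏ k ∈ Finset.range ℓ,
          (((k + 1).factorial : ℚ) * (p : ℚ) ^ (k + 1) / ((p * (k + 1)).factorial : ℚ)) := by
  have hmat : (Matrix.of fun i j : Fin ℓ =>
      AHcoeff p ((p : ℤ) * ((i : ℤ) + 1) - ((j : ℤ) + 1))) = AH.Cm p ℓ * AH.Bm p ℓ := by
    ext i j
    exact AH.factorization p ℓ hp i j
  rw [hmat, Matrix.det_mul, AH.det_Cm, one_mul]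
  exact AH.det_Bm p ℓ hp
end

section
/- Let p be a prime and u_n the coefficients of the Artin-Hasse exponential, with u_n = 0 for n < 0. For any ℓ ≥ 1, the determinant det_{1≤i,j≤ℓ}(u_{pi-j}), viewed as an element of ℚ ⊆ ℚ_p, is a p-adic unit (has p-adic valuation 0). -/
open PowerSeries Classical

open Matrix

namespace AH


variable (p : ℕ)

lemma coeff_inner (n : ℕ) :
    coeff n (AHinner p) = if ∃ k, n = p ^ k then (1 : ℚ) / n else 0 := by
  simp [AHinner]

lemma coeff_inner_pow_eq_zero {m n : ℕ} (h : n < m) : coeff n ((AHinner p) ^ m) = 0 := by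
  induction m generalizing n with
  | zero => omega
  | succ m ih =>
    rw [pow_succ, mul_comm, coeff_mul]
    apply Finset.sum_eq_zero
    rintro ⟨a, b⟩ hab
    rw [Finset.HasAntidiagonal.mem_antidiagonal] at hab
    rcases Nat.eq_zero_or_pos a with ha | ha
    · subst ha
      have : coeff 0 (AHinner p) = 0 := by
        rw [coeff_inner]
        split <;> simp
      simp [this]
    · have : b < m := by omega
      rw [ih this, mul_zero]

lemma coeff_exp (n : ℕ) :
    coeff n (AHexp p) =
      ∑ m ∈ Finset.range (n + 1), coeff n ((AHinner p) ^ m) / (m.factorial : ℚ) := by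
  simp [AHexp]

lemma coeff_exp' {n N : ℕ} (h : n + 1 ≤ N) :
    coeff n (AHexp p) =
      ∑ m ∈ Finset.range N, coeff n ((AHinner p) ^ m) / (m.factorial : ℚ) := by
  rw [coeff_exp]
  apply Finset.sum_subset
  · exact Finset.range_subset_range.2 h
  · intro m hm hm'
    rw [Finset.mem_range] at hm hm'
    rw [coeff_inner_pow_eq_zero p (by omega), zero_div]

lemma deriv_exp : d⁄dX ℚ (AHexp p) = (d⁄dX ℚ (AHinner p)) * AHexp p := by
  ext n
  rw [coeff_derivative, coeff_exp' p (le_refl (n+2)), coeff_mul]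
  -- LHS: (∑ m ∈ range (n+2), coeff (n+1) (g^m)/m!) * (n+1)
  rw [Finset.sum_mul]
  have hL : ∀ m ∈ Finset.range (n + 2),
      coeff (n+1) ((AHinner p) ^ m) / (m.factorial : ℚ) * ((n : ℚ) + 1)
        = (m : ℚ) * coeff n ((AHinner p) ^ (m - 1) * d⁄dX ℚ (AHinner p)) / (m.factorial : ℚ) := by
    intro m _
    have : coeff n (d⁄dX ℚ ((AHinner p) ^ m)) = coeff (n+1) ((AHinner p)^m) * ((n:ℚ)+1) := by
      rw [coeff_derivative]
    rw [div_mul_eq_mul_div, ← this, Derivation.leibniz_pow, map_nsmul, smul_eq_mul,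
      nsmul_eq_mul]
  rw [Finset.sum_congr rfl hL]
  -- now reduce LHS sum over range (n+2) via sum_range_succ'
  rw [Finset.sum_range_succ']
  simp only [Nat.cast_zero, zero_mul, zero_div, add_zero, Nat.add_sub_cancel]
  have hL2 : ∀ m ∈ Finset.range (n+1),
      ((m+1 : ℕ) : ℚ) * coeff n ((AHinner p) ^ m * d⁄dX ℚ (AHinner p)) / ((m+1).factorial : ℚ)
        = coeff n ((AHinner p) ^ m * d⁄dX ℚ (AHinner p)) / (m.factorial : ℚ) := by
    intro m _
    have h1 : ((m:ℚ) + 1) ≠ 0 := by positivity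
    have h2 : ((m.factorial : ℚ)) ≠ 0 := by
      exact_mod_cast Nat.cast_ne_zero.2 m.factorial_ne_zero
    rw [Nat.factorial_succ]
    push_cast
    field_simp
  calc ∑ m ∈ Finset.range (n+1),
        (((m+1:ℕ)):ℚ) * coeff n ((AHinner p) ^ m * d⁄dX ℚ (AHinner p)) / (((m+1)).factorial : ℚ)
      = ∑ m ∈ Finset.range (n+1),
        coeff n ((AHinner p) ^ m * d⁄dX ℚ (AHinner p)) / (m.factorial : ℚ) :=
        Finset.sum_congr rfl hL2
    _ = ∑ x ∈ Finset.HasAntidiagonal.antidiagonal n, coeff x.1 (d⁄dX ℚ (AHinner p)) * coeff x.2 (AHexp p) := by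
        simp only [mul_comm ((AHinner p)^_) (d⁄dX ℚ (AHinner p)), coeff_mul, Finset.sum_div]
        rw [Finset.sum_comm]
        apply Finset.sum_congr rfl
        rintro ⟨a, b⟩ hab
        rw [Finset.HasAntidiagonal.mem_antidiagonal] at hab
        rw [coeff_exp' p (show b + 1 ≤ n + 1 by omega), Finset.mul_sum]
        apply Finset.sum_congr rfl
        intro m _
        rw [div_eq_mul_inv, div_eq_mul_inv]
        ring

lemma AHcoeff_neg {n : ℤ} (h : n < 0) : AHcoeff p n = 0 := by simp [AHcoeff, h]

lemma AHcoeff_nat (n : ℕ) : AHcoeff p (n : ℤ) = coeff n (AHexp p) := by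
  simp [AHcoeff]

lemma AHcoeff_zero : AHcoeff p 0 = 1 := by
  have : AHcoeff p ((0:ℕ):ℤ) = coeff 0 (AHexp p) := AHcoeff_nat p 0
  rw [show ((0:ℕ):ℤ) = 0 by norm_num] at this
  rw [this, coeff_exp]
  simp

lemma sum_powers (hp : 1 < p) (N : ℕ) (f : ℕ → ℚ) :
    ∑ s ∈ Finset.range N, (if ∃ k, s = p ^ k then f s else 0)
      = ∑ k ∈ Finset.range N, (if p ^ k < N then f (p ^ k) else 0) := by
  rw [← Finset.sum_filter, ← Finset.sum_filter]
  apply Finset.sum_bij' (i := fun s _ => Nat.log p s) (j := fun k _ => p ^ k)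
  · rintro s hs
    rw [Finset.mem_filter, Finset.mem_range] at hs
    obtain ⟨hsN, k, rfl⟩ := hs
    rw [Finset.mem_filter, Finset.mem_range, Nat.log_pow hp]
    exact ⟨lt_of_le_of_lt (Nat.le_of_lt (Nat.lt_pow_self (n := k) hp)) hsN, hsN⟩
  · rintro k hk
    rw [Finset.mem_filter, Finset.mem_range] at hk
    rw [Finset.mem_filter, Finset.mem_range]
    exact ⟨hk.2, k, rfl⟩
  · rintro s hs
    rw [Finset.mem_filter, Finset.mem_range] at hs
    obtain ⟨hsN, k, rfl⟩ := hs
    rw [Nat.log_pow hp]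
  · rintro k hk
    rw [Nat.log_pow hp]
  · rintro s hs
    rw [Finset.mem_filter, Finset.mem_range] at hs
    obtain ⟨hsN, k, rfl⟩ := hs
    rw [Nat.log_pow hp]

lemma coeff_deriv_inner (i : ℕ) :
    coeff i (d⁄dX ℚ (AHinner p)) = if ∃ k, i + 1 = p ^ k then 1 else 0 := by
  rw [coeff_derivative, coeff_inner]
  split
  · push_cast
    rw [div_mul_cancel₀]
    positivity
  · rw [zero_mul]

lemma u_rec (hp : 1 < p) (n K : ℕ) (hK : n + 2 ≤ K) :
    ((n : ℚ) + 1) * coeff (n + 1) (AHexp p)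
      = ∑ k ∈ Finset.range K, AHcoeff p ((n : ℤ) + 1 - p ^ k) := by
  have h := congrArg (coeff n) (deriv_exp p)
  rw [coeff_derivative, coeff_mul, Finset.Nat.sum_antidiagonal_eq_sum_range_succ_mk] at h
  rw [mul_comm, h]
  have h2 : ∀ i ∈ Finset.range (n + 1),
      coeff (i, n - i).1 (d⁄dX ℚ (AHinner p)) * coeff (i, n - i).2 (AHexp p)
        = if ∃ k, i + 1 = p ^ k then coeff (n - i) (AHexp p) else 0 := by
    intro i _
    rw [coeff_deriv_inner]
    split <;> simp
  rw [show Finset.range n.succ = Finset.range (n+1) from rfl, Finset.sum_congr rfl h2]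
  have h3 : (∑ s ∈ Finset.range (n + 2), if ∃ k, s = p ^ k then coeff (n + 1 - s) (AHexp p) else 0)
      = ∑ i ∈ Finset.range (n + 1), if ∃ k, i + 1 = p ^ k then coeff (n - i) (AHexp p) else 0 := by
    rw [Finset.sum_range_succ']
    have : (if ∃ k, 0 = p ^ k then coeff (n + 1 - 0) (AHexp p) else 0) = 0 := by
      rw [if_neg]
      rintro ⟨k, hk⟩
      have := pow_pos (by omega : 0 < p) k
      omega
    rw [this, add_zero]
    exact Finset.sum_congr rfl fun i _ => by rw [Nat.succ_sub_succ]
  rw [← h3, sum_powers p hp]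

  -- now extend the range to K and convert terms
  have h4 : ∀ k ∈ Finset.range (n + 2),
      (if p ^ k < n + 2 then coeff (n + 1 - p ^ k) (AHexp p) else 0)
        = AHcoeff p ((n : ℤ) + 1 - p ^ k) := by
    intro k _
    split_ifs with hc
    · have hle : p ^ k ≤ n + 1 := by omega
      have : ((n : ℤ) + 1 - p ^ k) = ((n + 1 - p ^ k : ℕ) : ℤ) := by
        push_cast [hle]; ring
      rw [this, AHcoeff_nat]
    · rw [AHcoeff_neg]
      have h5 : ((n:ℤ)) + 2 ≤ ((p:ℤ))^k := by exact_mod_cast (by omega : n + 2 ≤ p ^ k)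
      push_cast
      omega
  rw [Finset.sum_congr rfl h4]
  apply Finset.sum_subset (Finset.range_subset_range.2 (by omega))
  intro k _ hk
  rw [Finset.mem_range, not_lt] at hk
  apply AHcoeff_neg
  have h6 : k < p ^ k := Nat.lt_pow_self (n := k) hp
  have h5 : ((n:ℤ)) + 2 ≤ ((p:ℤ))^k := by exact_mod_cast (by omega : n + 2 ≤ p ^ k)
  push_cast
  omega



noncomputable def eig (p m : ℕ) : ℕ → ℚ
  | i =>
    if h : m < i then
      (∑ s ∈ ((Finset.range i).filter fun s => 0 < s ∧ ∃ k, s = p ^ k).attach,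
        eig p m (i - s.1)) / ((p * (i - m) : ℕ) : ℚ)
    else if i = m then 1 else 0
  termination_by i => i
  decreasing_by
    have hs := s.2
    simp only [Finset.mem_filter, Finset.mem_range] at hs
    omega

lemma eig_lt {p m i : ℕ} (h : i < m) : eig p m i = 0 := by
  rw [eig]
  rw [dif_neg (by omega), if_neg (by omega)]

lemma eig_self (p m : ℕ) : eig p m m = 1 := by
  rw [eig]
  rw [dif_neg (by omega), if_pos rfl]

lemma eig_spec {p m i : ℕ} (hp : 0 < p) (h : m < i) :
    ((p * (i - m) : ℕ) : ℚ) * eig p m i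
      = ∑ s ∈ (Finset.range i).filter (fun s => 0 < s ∧ ∃ k, s = p ^ k), eig p m (i - s) := by
  rw [eig, dif_pos h, mul_div_cancel₀]
  · rw [← Finset.sum_attach ((Finset.range i).filter fun s => 0 < s ∧ ∃ k, s = p ^ k)
      (fun s => eig p m (i - s))]
  · have h1 : 0 < p * (i - m) := Nat.mul_pos hp (by omega)
    exact Nat.cast_ne_zero.2 (by omega)

lemma shift_sum {p : ℕ} (hp : 1 < p) {ℓ : ℕ} (i : Fin ℓ) (g : ℕ → ℚ) :
    (∑ i' : Fin ℓ, (if ∃ k, (i : ℕ) = (i' : ℕ) + p ^ k then 1 else 0) * g (i' : ℕ))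
      = ∑ s ∈ (Finset.range ((i : ℕ) + 1)).filter (fun s => 0 < s ∧ ∃ k, s = p ^ k),
          g ((i : ℕ) - s) := by
  rw [Fin.sum_univ_eq_sum_range (fun t => (if ∃ k, (i : ℕ) = t + p ^ k then 1 else 0) * g t) ℓ]
  have : ∀ t ∈ Finset.range ℓ,
      (if ∃ k, (i : ℕ) = t + p ^ k then 1 else 0) * g t
        = if ∃ k, (i : ℕ) = t + p ^ k then g t else 0 := by
    intro t _
    split <;> simp
  rw [Finset.sum_congr rfl this, ← Finset.sum_filter]
  apply Finset.sum_bij' (i := fun t _ => (i : ℕ) - t) (j := fun s _ => (i : ℕ) - s)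
  · rintro t ht
    rw [Finset.mem_filter, Finset.mem_range] at ht
    obtain ⟨htℓ, k, hk⟩ := ht
    rw [Finset.mem_filter, Finset.mem_range]
    have hpk : 0 < p ^ k := pow_pos (by omega) k
    refine ⟨by omega, by omega, k, by omega⟩
  · rintro s hs
    rw [Finset.mem_filter, Finset.mem_range] at hs
    obtain ⟨hsi, hs0, k, rfl⟩ := hs
    rw [Finset.mem_filter, Finset.mem_range]
    exact ⟨by omega, k, by omega⟩
  · rintro t ht
    rw [Finset.mem_filter, Finset.mem_range] at ht
    obtain ⟨htℓ, k, hk⟩ := ht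
    have hpk : 0 < p ^ k := pow_pos (by omega) k
    omega
  · rintro s hs
    rw [Finset.mem_filter, Finset.mem_range] at hs
    omega
  · rintro t ht
    rw [Finset.mem_filter, Finset.mem_range] at ht
    obtain ⟨htℓ, k, hk⟩ := ht
    have hpk : 0 < p ^ k := pow_pos (by omega) k
    congr 1
    omega


lemma u_rec_int (p : ℕ) (hp : 1 < p) (n K : ℕ) (hK : n + 2 ≤ K) :
    ((n : ℚ) + 1) * AHcoeff p ((n : ℤ) + 1)
      = ∑ k ∈ Finset.range K, AHcoeff p ((n : ℤ) + 1 - p ^ k) := by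
  rw [show ((n : ℤ) + 1) = ((n + 1 : ℕ) : ℤ) from by push_cast; ring, AHcoeff_nat]
  exact u_rec p hp n K hK

noncomputable def Tmat (p ℓ : ℕ) : Matrix (Fin ℓ) (Fin ℓ) ℚ :=
  Matrix.of fun i i' => (if i = i' then ((p : ℚ) * ((i : ℕ) + 1)) else 0)
    - (if ∃ k, (i : ℕ) = (i' : ℕ) + p ^ k then 1 else 0)

noncomputable def Vmat (p ℓ : ℕ) : Matrix (Fin ℓ) (Fin ℓ) ℚ :=
  Matrix.of fun i m => eig p ((m : ℕ) + 1) ((i : ℕ) + 1)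

noncomputable def Dmat (p ℓ : ℕ) : Matrix (Fin ℓ) (Fin ℓ) ℚ :=
  Matrix.diagonal fun m : Fin ℓ => (p : ℚ) * ((m : ℕ) + 1)

noncomputable def cvec (p ℓ : ℕ) (j : ℕ) : Fin ℓ → ℚ :=
  fun i => AHcoeff p ((p : ℤ) * ((i : ℕ) + 1) - j)

variable {p ℓ : ℕ}

lemma row_apply (hp : 1 < p) (i : Fin ℓ) (g : ℕ → ℚ) :
    (∑ i' : Fin ℓ, Tmat p ℓ i i' * g (i' : ℕ))
      = (p : ℚ) * ((i : ℕ) + 1) * g (i : ℕ)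
        - ∑ s ∈ (Finset.range ((i : ℕ) + 1)).filter (fun s => 0 < s ∧ ∃ k, s = p ^ k),
            g ((i : ℕ) - s) := by
  have hss := shift_sum hp i g
  simp only [ite_mul, zero_mul, one_mul] at hss
  simp only [Tmat, Matrix.of_apply, sub_mul, Finset.sum_sub_distrib, ite_mul, zero_mul, one_mul]
  rw [Finset.sum_ite_eq, if_pos (Finset.mem_univ i), hss]

lemma TV_eq_VD (hp : 1 < p) : Tmat p ℓ * Vmat p ℓ = Vmat p ℓ * Dmat p ℓ := by
  ext i m
  rw [Matrix.mul_apply, Dmat, Matrix.mul_diagonal]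
  have := row_apply (ℓ := ℓ) hp i (fun t => eig p ((m : ℕ) + 1) (t + 1))
  simp only [Vmat, Matrix.of_apply]
  rw [this]
  rcases lt_trichotomy (m : ℕ) (i : ℕ) with hmi | hmi | hmi
  · -- m < i : use eig_spec at i+1
    have hspec := eig_spec (p := p) (m := (m : ℕ) + 1) (i := (i : ℕ) + 1) (by omega) (by omega)
    have hsum : ∑ s ∈ (Finset.range ((i : ℕ) + 1)).filter (fun s => 0 < s ∧ ∃ k, s = p ^ k),
          eig p ((m : ℕ) + 1) ((i : ℕ) - s + 1)
        = ∑ s ∈ (Finset.range ((i : ℕ) + 1)).filter (fun s => 0 < s ∧ ∃ k, s = p ^ k),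
          eig p ((m : ℕ) + 1) ((i : ℕ) + 1 - s) := by
      apply Finset.sum_congr rfl
      intro s hs
      rw [Finset.mem_filter, Finset.mem_range] at hs
      congr 1
      omega
    rw [hsum, ← hspec]
    have hc : ((p * ((i : ℕ) + 1 - ((m : ℕ) + 1)) : ℕ) : ℚ)
        = (p : ℚ) * ((i : ℕ) + 1) - (p : ℚ) * ((m : ℕ) + 1) := by
      push_cast [show (m : ℕ) ≤ (i : ℕ) from by omega]
      ring
    rw [hc]
    ring
  · -- m = i
    have h1 : eig p ((m : ℕ) + 1) ((i : ℕ) + 1) = 1 := by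
      rw [show (i : ℕ) + 1 = (m : ℕ) + 1 by omega]; exact eig_self p _
    have h2 : ∑ s ∈ (Finset.range ((i : ℕ) + 1)).filter (fun s => 0 < s ∧ ∃ k, s = p ^ k),
        eig p ((m : ℕ) + 1) ((i : ℕ) - s + 1) = 0 := by
      apply Finset.sum_eq_zero
      intro s hs
      rw [Finset.mem_filter, Finset.mem_range] at hs
      exact eig_lt (by omega)
    rw [h1, h2, hmi]
    ring
  · -- i < m
    have h1 : eig p ((m : ℕ) + 1) ((i : ℕ) + 1) = 0 := eig_lt (by omega)
    have h2 : ∑ s ∈ (Finset.range ((i : ℕ) + 1)).filter (fun s => 0 < s ∧ ∃ k, s = p ^ k),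
        eig p ((m : ℕ) + 1) ((i : ℕ) - s + 1) = 0 := by
      apply Finset.sum_eq_zero
      intro s hs
      rw [Finset.mem_filter, Finset.mem_range] at hs
      exact eig_lt (by omega)
    rw [h1, h2]
    ring

lemma T_mulVec (hp : 1 < p) (j : ℕ) (hj : 1 ≤ j) :
    Tmat p ℓ *ᵥ cvec p ℓ j = (j : ℚ) • cvec p ℓ j + cvec p ℓ (j + 1) := by
  funext i
  rw [Matrix.mulVec, dotProduct]
  have := row_apply (ℓ := ℓ) hp i (fun t => AHcoeff p ((p : ℤ) * (t + 1) - j))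
  simp only [Pi.add_apply, Pi.smul_apply, smul_eq_mul, cvec]
  rw [this]
  set n : ℤ := (p : ℤ) * ((i : ℕ) + 1) - j with hn
  have hcast : (p : ℤ) * ((i : ℕ) + 1) - ((j + 1 : ℕ) : ℤ) = n - 1 := by
    rw [hn]; push_cast; ring
  rw [hcast]
  -- key : p(i+1) * U(n) - S = j * U(n) + U(n-1)
  rcases le_or_gt n 0 with hn0 | hn0
  · -- everything vanishes
    have hS : ∑ s ∈ (Finset.range ((i : ℕ) + 1)).filter (fun s => 0 < s ∧ ∃ k, s = p ^ k),
        AHcoeff p ((p : ℤ) * (((i : ℕ) - s : ℕ) + 1) - j) = 0 := by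
      apply Finset.sum_eq_zero
      intro s hs
      rw [Finset.mem_filter, Finset.mem_range] at hs
      apply AHcoeff_neg
      have h1 : ((((i : ℕ) - s : ℕ)) : ℤ) + 1 ≤ (i : ℕ) := by
        have := hs.1; have := hs.2.1
        push_cast
        omega
      have h2 : (p : ℤ) * ((((i : ℕ) - s : ℕ)) + 1) ≤ (p : ℤ) * (i : ℕ) :=
        mul_le_mul_of_nonneg_left h1 (by positivity)
      have h3 : (p : ℤ) * ((i : ℕ) + 1) - j ≤ 0 := hn0
      have hp' : (1 : ℤ) < p := by exact_mod_cast hp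
      nlinarith
    rw [hS]
    have hU1 : AHcoeff p (n - 1) = 0 := AHcoeff_neg p (by omega)
    rcases lt_or_eq_of_le hn0 with hlt | heq
    · rw [AHcoeff_neg p hlt, hU1]
      ring
    · -- n = 0 : p(i+1) = j as rationals
      have : ((p : ℚ) * ((i : ℕ) + 1)) = (j : ℚ) := by
        have : ((p : ℤ) * ((i : ℕ) + 1)) = (j : ℤ) := by omega
        exact_mod_cast this
      rw [hU1, this]
      ring
  · -- n ≥ 1
    obtain ⟨n₀, hn₀⟩ : ∃ n₀ : ℕ, n = (n₀ : ℤ) + 1 := ⟨(n - 1).toNat, by omega⟩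
    set K : ℕ := ℓ + n₀ + 1 with hK
    have hrec := u_rec_int p hp n₀ (K + 1) (by omega)
    rw [← hn₀] at hrec
    -- split off k = 0
    rw [Finset.sum_range_succ'] at hrec
    have hz : AHcoeff p (n - p ^ 0) = AHcoeff p (n - 1) := by norm_num
    -- S = ∑_{k < K-1} U(n - p^(k+1))
    have hS : ∑ s ∈ (Finset.range ((i : ℕ) + 1)).filter (fun s => 0 < s ∧ ∃ k, s = p ^ k),
          AHcoeff p ((p : ℤ) * (((i : ℕ) - s : ℕ) + 1) - j)
        = ∑ k ∈ Finset.range K, AHcoeff p (n - p ^ (k + 1)) := by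
      have hsub : ∑ k ∈ Finset.range K, AHcoeff p (n - p ^ (k + 1))
          = ∑ k ∈ (Finset.range K).filter (fun k => p ^ k ≤ (i : ℕ)),
              AHcoeff p (n - p ^ (k + 1)) := by
        symm
        apply Finset.sum_subset (Finset.filter_subset _ _)
        intro k hkK hk
        have hik : (i : ℕ) + 1 ≤ p ^ k := by
          by_contra hcon
          exact hk (Finset.mem_filter.2 ⟨hkK, by omega⟩)
        apply AHcoeff_neg
        have h1 : ((i : ℕ) : ℤ) + 1 ≤ (p : ℤ) ^ k := by exact_mod_cast hik
        have hp' : (1 : ℤ) < p := by exact_mod_cast hp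
        have h2 : (p : ℤ) ^ (k + 1) = p * p ^ k := by ring
        have hj' : (1 : ℤ) ≤ j := by exact_mod_cast hj
        have : (p : ℤ) * ((i : ℕ) + 1) ≤ p * p ^ k := by nlinarith
        push_cast
        omega
      rw [hsub]
      apply Finset.sum_bij' (i := fun s _ => Nat.log p s) (j := fun k _ => p ^ k)
      · rintro s hs
        rw [Finset.mem_filter, Finset.mem_range] at hs
        obtain ⟨hsi, hs0, k, rfl⟩ := hs
        rw [Finset.mem_filter, Finset.mem_range, Nat.log_pow hp]
        have : k < p ^ k := Nat.lt_pow_self (n := k) hp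
        exact ⟨by omega, by omega⟩
      · rintro k hk
        rw [Finset.mem_filter, Finset.mem_range] at hk
        rw [Finset.mem_filter, Finset.mem_range]
        exact ⟨by omega, pow_pos (by omega) k, k, rfl⟩
      · rintro s hs
        rw [Finset.mem_filter, Finset.mem_range] at hs
        obtain ⟨hsi, hs0, k, rfl⟩ := hs
        rw [Nat.log_pow hp]
      · rintro k hk
        rw [Nat.log_pow hp]
      · rintro s hs
        rw [Finset.mem_filter, Finset.mem_range] at hs
        obtain ⟨hsi, hs0, k, rfl⟩ := hs
        rw [Nat.log_pow hp]
        congr 1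
        have hle : p ^ k ≤ (i : ℕ) := by omega
        have : ((((i : ℕ) - p ^ k : ℕ)) : ℤ) = ((i : ℕ) : ℤ) - (p : ℤ) ^ k := by
          push_cast [hle]
          ring
        rw [this, hn]
        push_cast
        ring
    rw [hS]
    -- now combine with hrec
    have hmain : ((n₀ : ℚ) + 1) = (p : ℚ) * ((i : ℕ) + 1) - j := by
      have : ((n₀ : ℤ) + 1) = (p : ℤ) * ((i : ℕ) + 1) - j := by omega
      exact_mod_cast this
    rw [hz, hmain] at hrec
    linear_combination hrec


variable (p ℓ : ℕ)

lemma Vmat_blockTriangular : (Vmat p ℓ).BlockTriangular OrderDual.toDual := by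
  intro i m h
  have him : (i : ℕ) < (m : ℕ) := h
  exact eig_lt (by omega)

lemma det_Vmat : (Vmat p ℓ).det = 1 := by
  rw [Matrix.det_of_lowerTriangular _ (Vmat_blockTriangular p ℓ)]
  apply Finset.prod_eq_one
  intro i _
  exact eig_self p ((i : ℕ) + 1)

lemma isUnit_det_Vmat : IsUnit (Vmat p ℓ).det := by
  rw [det_Vmat]; exact isUnit_one

noncomputable def wv : Fin ℓ → ℚ := (Vmat p ℓ)⁻¹ *ᵥ cvec p ℓ 1

noncomputable def wj (j : ℕ) : Fin ℓ → ℚ :=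
  fun m => (∏ t ∈ Finset.Icc 1 (j - 1), ((p : ℚ) * ((m : ℕ) + 1) - t)) * wv p ℓ m

lemma V_mulVec_wj (hp : 1 < p) : ∀ j, 1 ≤ j → Vmat p ℓ *ᵥ wj p ℓ j = cvec p ℓ j := by
  intro j hj
  induction j, hj using Nat.le_induction with
  | base =>
    have : wj p ℓ 1 = wv p ℓ := by
      funext m
      simp [wj]
    rw [this, wv, Matrix.mulVec_mulVec, Matrix.mul_nonsing_inv _ (isUnit_det_Vmat p ℓ),
      Matrix.one_mulVec]
  | succ j hj ih =>
    have hstep : wj p ℓ (j + 1)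
        = (Dmat p ℓ *ᵥ wj p ℓ j) - (j : ℚ) • wj p ℓ j := by
      funext m
      have h1 : (j + 1) - 1 = (j - 1) + 1 := by omega
      simp only [wj, Pi.sub_apply, Pi.smul_apply, smul_eq_mul, h1]
      rw [Finset.prod_Icc_succ_top (by omega)]
      have h2 : ((j - 1 : ℕ) : ℚ) + 1 = (j : ℚ) := by
        have : ((j - 1 : ℕ) : ℚ) = (j : ℚ) - 1 := by
          push_cast [show 1 ≤ j from hj]
          ring
        rw [this]; ring
      have h3 : (Dmat p ℓ *ᵥ wj p ℓ j) m = ((p : ℚ) * ((m : ℕ) + 1)) * wj p ℓ j m := by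
        rw [Dmat, Matrix.mulVec_diagonal]
      rw [h3]
      simp only [wj, h2]
      rw [show (j - 1 + 1 : ℕ) = j from by omega]
      ring
    rw [hstep, Matrix.mulVec_sub, Matrix.mulVec_smul, ih, Matrix.mulVec_mulVec,
      ← TV_eq_VD hp, ← Matrix.mulVec_mulVec, ih, T_mulVec hp j (by omega)]
    abel

lemma prod_Icc_fact (J : ℕ) (hJ : 1 ≤ J) :
    ∏ t ∈ Finset.Icc 1 (J - 1), ((J : ℚ) - t) = ((J - 1).factorial : ℚ) := by
  have h1 : Finset.Icc 1 (J - 1) = Finset.Ico 1 J := by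
    rw [← Finset.Ico_add_one_right_eq_Icc]
    congr 1
    omega
  rw [h1, Finset.prod_Ico_eq_prod_range]
  have h2 : ∀ t ∈ Finset.range (J - 1), ((J : ℚ) - (1 + t : ℕ))
      = ((((J - 1) - 1 - t : ℕ)) : ℚ) + 1 := by
    intro t ht
    rw [Finset.mem_range] at ht
    have hcast : (((J - 1) - 1 - t : ℕ) : ℤ) = (J : ℤ) - 2 - t := by omega
    have : ((((J - 1) - 1 - t : ℕ)) : ℚ) = (J : ℚ) - 2 - t := by exact_mod_cast hcast
    rw [this]
    push_cast
    ring
  rw [Finset.prod_congr rfl h2, Finset.prod_range_reflect (fun s => ((s : ℚ) + 1)) (J - 1)]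
  rw [show ((J - 1).factorial : ℚ) = ((∏ s ∈ Finset.range (J - 1), (s + 1) : ℕ) : ℚ) by
    rw [Finset.prod_range_add_one_eq_factorial]]
  push_cast
  rfl

lemma wv_spec (hp : 1 < p) (m : Fin ℓ) :
    ((p * ((m : ℕ) + 1) - 1).factorial : ℚ) * wv p ℓ m = 1 := by
  set J : ℕ := p * ((m : ℕ) + 1) with hJ
  have hJ1 : 1 ≤ J := by
    have : 1 ≤ (m : ℕ) + 1 := by omega
    calc 1 ≤ p := by omega
    _ = p * 1 := by ring
    _ ≤ p * ((m : ℕ) + 1) := Nat.mul_le_mul_left p this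
  have hcol := congrFun (V_mulVec_wj p ℓ hp J hJ1) m
  -- RHS : cvec at J, row m = AHcoeff p 0 = 1
  have hrhs : cvec p ℓ J m = 1 := by
    rw [cvec, show (p : ℤ) * ((m : ℕ) + 1) - (J : ℤ) = 0 by rw [hJ]; push_cast; ring,
      AHcoeff_zero]
  rw [hrhs] at hcol
  -- LHS : only the m-th term survives
  rw [Matrix.mulVec, dotProduct] at hcol
  have hterm : ∀ m' : Fin ℓ, m' ∈ Finset.univ → m' ≠ m →
      Vmat p ℓ m m' * wj p ℓ J m' = 0 := by
    intro m' _ hne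
    rcases lt_or_gt_of_ne (fun h => hne (Fin.ext h) : (m' : ℕ) ≠ (m : ℕ)) with hlt | hgt
    · -- m' < m : the product in wj contains the zero factor t = p * (m' + 1)
      have : wj p ℓ J m' = 0 := by
        rw [wj, Finset.prod_eq_zero (i := p * ((m' : ℕ) + 1)), zero_mul]
        · rw [Finset.mem_Icc]
          constructor
          · have : 1 ≤ (m' : ℕ) + 1 := by omega
            calc 1 ≤ p := by omega
            _ = p * 1 := by ring
            _ ≤ p * ((m' : ℕ) + 1) := Nat.mul_le_mul_left p this
          · have h1 : (m' : ℕ) + 1 + 1 ≤ (m : ℕ) + 1 := by omega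
            have h4 := Nat.mul_le_mul_left p h1
            have h5 : p * ((m' : ℕ) + 1 + 1) = p * ((m' : ℕ) + 1) + p := by ring
            omega
        · push_cast
          ring
      rw [this, mul_zero]
    · -- m < m' : Vmat entry vanishes
      have : Vmat p ℓ m m' = 0 := eig_lt (by omega)
      rw [this, zero_mul]
  rw [Finset.sum_eq_single_of_mem m (Finset.mem_univ m) hterm] at hcol
  have hVmm : Vmat p ℓ m m = 1 := eig_self p _
  have hJQ : (p : ℚ) * ((m : ℕ) + 1) = (J : ℚ) := by rw [hJ]; push_cast; ring
  rw [hVmm, one_mul, wj, hJQ, prod_Icc_fact J hJ1] at hcol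
  exact hcol


noncomputable def Wmat : Matrix (Fin ℓ) (Fin ℓ) ℚ :=
  Matrix.of fun m j : Fin ℓ => wj p ℓ ((j : ℕ) + 1) m

noncomputable def Pmat : Matrix (Fin ℓ) (Fin ℓ) ℚ :=
  Matrix.of fun m j : Fin ℓ =>
    ∏ t ∈ Finset.Icc 1 (j : ℕ), ((p : ℚ) * ((m : ℕ) + 1) - t)

lemma M_eq_VW (hp : 1 < p) :
    (Matrix.of fun i j : Fin ℓ =>
        AHcoeff p ((p : ℤ) * ((i : ℤ) + 1) - ((j : ℤ) + 1)))
      = Vmat p ℓ * Wmat p ℓ := by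
  ext i j
  have h := congrFun (V_mulVec_wj p ℓ hp ((j : ℕ) + 1) (by omega)) i
  rw [Matrix.mulVec, dotProduct] at h
  rw [Matrix.mul_apply, Matrix.of_apply]
  have harg : (p : ℤ) * ((i : ℤ) + 1) - ((j : ℤ) + 1)
      = (p : ℤ) * (((i : ℕ) : ℤ) + 1) - (((j : ℕ) + 1 : ℕ) : ℤ) := by
    push_cast
    ring
  rw [harg]
  rw [show (∑ m : Fin ℓ, Vmat p ℓ i m * Wmat p ℓ m j)
      = ∑ m : Fin ℓ, Vmat p ℓ i m * wj p ℓ ((j : ℕ) + 1) m from rfl, h]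
  rfl

lemma Wmat_eq : Wmat p ℓ = Matrix.of fun m j : Fin ℓ => wv p ℓ m * Pmat p ℓ m j := by
  ext m j
  simp only [Wmat, Pmat, Matrix.of_apply, wj, Nat.add_sub_cancel]
  ring

lemma sum_natDegree (s : Finset ℕ) (g : ℕ → ℚ) :
    (∑ t ∈ s, (Polynomial.X - Polynomial.C (g t)).natDegree) = s.card := by
  rw [Finset.sum_congr rfl (fun t _ => Polynomial.natDegree_X_sub_C (g t))]
  simp

lemma det_Pmat : (Pmat p ℓ).det
    = ∏ m : Fin ℓ, ((p : ℚ) ^ (m : ℕ) * ((m : ℕ).factorial : ℚ)) := by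
  have h2 : (Matrix.vandermonde fun m : Fin ℓ => (p : ℚ) * ((m : ℕ) + 1)).det
      = (Matrix.of fun m j : Fin ℓ =>
          ∏ t ∈ Finset.range (j : ℕ),
            ((p : ℚ) * ((m : ℕ) + 1) - (p : ℚ) * ((t : ℕ) + 1))).det := by
    have := Matrix.det_eval_matrixOfPolynomials_eq_det_vandermonde
      (v := fun m : Fin ℓ => (p : ℚ) * ((m : ℕ) + 1))
      (p := fun j : Fin ℓ => ∏ t ∈ Finset.range (j : ℕ), (Polynomial.X - Polynomial.C ((p : ℚ) * ((t : ℕ) + 1))))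
      (by
        intro j
        rw [Polynomial.natDegree_prod_of_monic _ _ (fun t _ => Polynomial.monic_X_sub_C _),
          sum_natDegree, Finset.card_range])
      (by
        intro j
        exact Polynomial.monic_prod_of_monic _ _ (fun t _ => Polynomial.monic_X_sub_C _))
    rw [this]
    congr 1
    ext m j
    simp [Polynomial.eval_prod]
  have h1' : (Pmat p ℓ) = Matrix.of fun m j : Fin ℓ =>
      Polynomial.eval ((p : ℚ) * ((m : ℕ) + 1))
        (∏ t ∈ Finset.Icc 1 (j : ℕ), (Polynomial.X - Polynomial.C ((t : ℚ)))) := by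
    ext m j
    simp [Pmat, Polynomial.eval_prod]
  have h1 := Matrix.det_eval_matrixOfPolynomials_eq_det_vandermonde
      (v := fun m : Fin ℓ => (p : ℚ) * ((m : ℕ) + 1))
      (p := fun j : Fin ℓ => ∏ t ∈ Finset.Icc 1 (j : ℕ), (Polynomial.X - Polynomial.C ((t : ℚ))))
      (by
        intro j
        rw [Polynomial.natDegree_prod_of_monic _ _ (fun t _ => Polynomial.monic_X_sub_C _),
          sum_natDegree, Nat.card_Icc]
        omega)
      (by
        intro j
        exact Polynomial.monic_prod_of_monic _ _ (fun t _ => Polynomial.monic_X_sub_C _))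
  rw [h1']
  rw [← h1, h2]
  -- triangular determinant
  set E : Matrix (Fin ℓ) (Fin ℓ) ℚ := Matrix.of fun m j : Fin ℓ =>
      ∏ t ∈ Finset.range (j : ℕ), ((p : ℚ) * ((m : ℕ) + 1) - (p : ℚ) * ((t : ℕ) + 1)) with hE
  have htri : E.BlockTriangular OrderDual.toDual := by
    intro m j h
    have hmj : (m : ℕ) < (j : ℕ) := h
    rw [hE]
    simp only [Matrix.of_apply]
    apply Finset.prod_eq_zero (Finset.mem_range.2 hmj)
    ring
  rw [Matrix.det_of_lowerTriangular _ htri]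
  apply Finset.prod_congr rfl
  intro m _
  rw [hE]
  simp only [Matrix.of_apply]
  have hterm : ∀ t ∈ Finset.range (m : ℕ),
      ((p : ℚ) * ((m : ℕ) + 1) - (p : ℚ) * ((t : ℕ) + 1))
        = (p : ℚ) * ((((m : ℕ) - t : ℕ)) : ℚ) := by
    intro t ht
    rw [Finset.mem_range] at ht
    have : ((((m : ℕ) - t : ℕ)) : ℚ) = ((m : ℕ) : ℚ) - t := by
      push_cast [show t ≤ (m : ℕ) from by omega]
      ring
    rw [this]
    ring
  rw [Finset.prod_congr rfl hterm, Finset.prod_mul_distrib, Finset.prod_const,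
    Finset.card_range]
  congr 1
  have hterm2 : ∀ t ∈ Finset.range (m : ℕ),
      ((((m : ℕ) - t : ℕ)) : ℚ) = ((((m : ℕ) - 1 - t : ℕ) : ℚ) + 1) := by
    intro t ht
    rw [Finset.mem_range] at ht
    have : ((m : ℕ) - t) = ((m : ℕ) - 1 - t) + 1 := by omega
    rw [this]
    push_cast
    ring
  rw [Finset.prod_congr rfl hterm2,
    Finset.prod_range_reflect (fun s => ((s : ℚ) + 1)) (m : ℕ)]
  rw [show (((m : ℕ).factorial : ℚ))
      = ((∏ s ∈ Finset.range (m : ℕ), (s + 1) : ℕ) : ℚ) by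
    rw [Finset.prod_range_add_one_eq_factorial]]
  push_cast
  rfl

lemma det_M (hp : 1 < p) :
    (Matrix.of fun i j : Fin ℓ =>
        AHcoeff p ((p : ℤ) * ((i : ℤ) + 1) - ((j : ℤ) + 1))).det
      = ∏ m : Fin ℓ,
          ((p : ℚ) ^ (m : ℕ) * ((m : ℕ).factorial : ℚ) * wv p ℓ m) := by
  rw [M_eq_VW p ℓ hp, Matrix.det_mul, det_Vmat, one_mul, Wmat_eq,
    Matrix.det_mul_column, det_Pmat]
  rw [← Finset.prod_mul_distrib]
  apply Finset.prod_congr rfl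
  intro m _
  ring

theorem final (hp : Fact p.Prime) (hℓ : 1 ≤ ℓ) :
    ‖((Matrix.det (Matrix.of fun i j : Fin ℓ =>
        AHcoeff p ((p : ℤ) * ((i : ℤ) + 1) - ((j : ℤ) + 1))) : ℚ) : ℚ_[p])‖ = 1 := by
  have hp1 : 1 < p := hp.out.one_lt
  rw [det_M p ℓ hp1]
  push_cast
  rw [norm_prod]
  apply Finset.prod_eq_one
  intro m _
  set M : ℕ := (m : ℕ) with hM
  set J : ℕ := p * (M + 1) with hJj
  have hwv : wv p ℓ m = (((J - 1).factorial : ℚ))⁻¹ :=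
    eq_inv_of_mul_eq_one_right (wv_spec p ℓ hp1 m)
  have hq : ((p : ℚ) ^ M * (M.factorial : ℚ) * wv p ℓ m)
      = (((p ^ M * M.factorial : ℕ) : ℚ)) / (((J - 1).factorial : ℕ) : ℚ) := by
    rw [hwv]
    push_cast
    ring
  have hval : padicValRat p ((((p ^ M * M.factorial : ℕ) : ℚ)) / (((J - 1).factorial : ℕ) : ℚ)) = 0 := by
    have hnum : ((p ^ M * M.factorial : ℕ) : ℚ) ≠ 0 := by
      have h0 : 0 < p ^ M * M.factorial := Nat.mul_pos (pow_pos (by omega) M)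
        M.factorial_pos
      exact Nat.cast_ne_zero.2 h0.ne'
    have hden : (((J - 1).factorial : ℕ) : ℚ) ≠ 0 :=
      Nat.cast_ne_zero.2 (J - 1).factorial_ne_zero
    rw [padicValRat.div hnum hden, padicValRat.of_nat, padicValRat.of_nat]
    have h1 : padicValNat p (p ^ M * M.factorial) = M + padicValNat p M.factorial := by
      rw [padicValNat.mul (pow_ne_zero M (by omega)) M.factorial_ne_zero,
        padicValNat.prime_pow]
    have h2 : padicValNat p ((J - 1).factorial) = M + padicValNat p M.factorial := by
      have hJ1 : J - 1 = p * M + (p - 1) := by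
        have hp0 : 0 < p := by omega
        rw [hJj]
        have : p * (M + 1) = p * M + p := by ring
        omega
      rw [hJ1, padicValNat_factorial_mul_add M (by omega), padicValNat_factorial_mul,
        add_comm]
    rw [h1, h2]
    push_cast
    ring
  have hq0 : ((((p ^ M * M.factorial : ℕ) : ℚ)) / (((J - 1).factorial : ℕ) : ℚ)) ≠ 0 := by
    apply div_ne_zero
    · have h0 : 0 < p ^ M * M.factorial := Nat.mul_pos (pow_pos (by omega) M)
        M.factorial_pos
      exact Nat.cast_ne_zero.2 h0.ne'
    · exact Nat.cast_ne_zero.2 (J - 1).factorial_ne_zero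
  have : ((p : ℚ_[p]) ^ M * ((M.factorial : ℕ) : ℚ_[p]) * ((wv p ℓ m : ℚ) : ℚ_[p]))
      = (((((p ^ M * M.factorial : ℕ) : ℚ)) / (((J - 1).factorial : ℕ) : ℚ) : ℚ) : ℚ_[p]) := by
    rw [← hq]
    push_cast
    ring
  rw [this, Padic.eq_padicNorm, padicNorm.eq_zpow_of_nonzero hq0, hval]
  norm_num


end AH

theorem det_AHcoeff_isUnit (p : ℕ) [Fact p.Prime] (ℓ : ℕ) (hℓ : 1 ≤ ℓ) :
    ‖((Matrix.det (Matrix.of fun i j : Fin ℓ =>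
        AHcoeff p ((p : ℤ) * ((i : ℤ) + 1) - ((j : ℤ) + 1))) : ℚ) : ℚ_[p])‖ = 1 := by
  exact AH.final p ℓ ‹_› hℓ
end
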